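/- arXiv:2109.12618 — 10 statements merged into one kernel-verified Lean document; each statement's English description precedes it below -/
import Mathlib

section
/- Two signed graphs on the same underlying graph are switching equivalent if and only if they have the same set of negative cycles (a cycle is negative if it contains an odd number of negative edges). -/
/-!
Let `ρ := σ xor τ` mark the edges on which the two signatures differ. Switching equivalence says
that `ρ` is a coboundary, `ρ s(u, v) = sw u xor sw v`, and equality of the negative cycles says
that every cycle contains an even number of `ρ`-edges. A coboundary is even on every walk between
vertices with equal `sw`, in particular on closed walks. Conversely, if every cycle is even, so is
every closed walk: each loop that `Walk.bypass` cuts off is an edge followed by a path, hence a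
cycle or an edge traversed twice. So the `ρ`-parity of a walk depends only on its endpoints, and
the parity of a walk to a chosen root of each connected component is a switching function.
-/

/-- `σ` and `τ` are switching equivalent signatures on the graph `G`:
`τ` is obtained from `σ` by switching at the set of vertices where `sw` is `true`
(the sign of an edge flips exactly when its endpoints get different values of `sw`). -/
def SwEquiv {V : Type} (G : SimpleGraph V) (σ τ : Sym2 V → Bool) : Prop :=
  ∃ sw : V → Bool, ∀ u v : V, G.Adj u v →
    τ s(u, v) = Bool.xor (σ s(u, v)) (Bool.xor (sw u) (sw v))

theorem List.odd_countP_not_iff_iff_even_countP_xor {α : Type*} (σ τ : α → Bool) (l : List α) :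
    (Odd (l.countP fun e => !σ e) ↔ Odd (l.countP fun e => !τ e)) ↔
      Even (l.countP fun e => σ e ^^ τ e) := by
  induction l with
  | nil => simp
  | cons a l ih =>
    simp only [List.countP_cons, ← Nat.not_even_iff_odd] at ih ⊢
    cases σ a <;> cases τ a <;> simp only [Bool.not_false, Bool.not_true, Bool.xor_false,
      Bool.xor_true, if_true, Nat.even_add_one] <;> tauto

namespace SimpleGraph.Walk

variable {V : Type*} {G : SimpleGraph V}

theorem IsPath.eq_cons_nil_of_mem_edges {u v : V} {q : G.Walk u v} (hq : q.IsPath)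
    (h : G.Adj u v) (he : s(u, v) ∈ q.edges) : q = cons h Walk.nil := by
  cases q with
  | nil => simp at he
  | @cons _ w _ h' r =>
    rw [cons_isPath_iff] at hq
    rw [edges_cons, List.mem_cons] at he
    rcases he with he | he
    · obtain rfl : v = w := by
        rcases Sym2.eq_iff.mp he with ⟨-, hvw⟩ | ⟨-, rfl⟩
        · exact hvw
        · exact absurd rfl h.ne
      rw [isPath_iff_nil.mp hq.1 |>.eq_nil]
    · exact absurd (r.fst_mem_support_of_mem_edges he) hq.2

variable {ρ : Sym2 V → Bool}

theorem even_countP_edges_cons_of_isPath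
    (hcyc : ∀ (w : V) (c : G.Walk w w), c.IsCycle → Even (c.edges.countP ρ))
    {u v : V} (h : G.Adj u v) {q : G.Walk v u} (hq : q.IsPath) :
    Even ((cons h q).edges.countP ρ) := by
  by_cases he : s(v, u) ∈ q.edges
  · rw [hq.eq_cons_nil_of_mem_edges h.symm he]
    simp only [edges_cons, edges_nil, Sym2.eq_swap (a := v), List.countP_cons, List.countP_nil]
    cases ρ s(u, v) <;> decide
  · rw [Sym2.eq_swap] at he
    exact hcyc u _ ((cons_isCycle_iff q h).mpr ⟨hq, he⟩)

theorem even_countP_edges_bypass_iff [DecidableEq V]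
    (hcyc : ∀ (w : V) (c : G.Walk w w), c.IsCycle → Even (c.edges.countP ρ))
    {u v : V} (p : G.Walk u v) :
    Even (p.bypass.edges.countP ρ) ↔ Even (p.edges.countP ρ) := by
  induction p with
  | nil => rfl
  | @cons u w v h p ih =>
    rw [bypass]
    split_ifs with hu
    · have hloop := even_countP_edges_cons_of_isPath hcyc h (p.bypass_isPath.takeUntil hu)
      have hsplit := congrArg (fun q => q.edges.countP ρ) (p.bypass.take_spec hu)
      simp only [edges_cons, edges_append, List.countP_cons, List.countP_append] at hloop hsplit ⊢
      rw [Nat.even_add, ← ih, ← hsplit]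
      simp only [Nat.even_add] at hloop ⊢
      tauto
    · simp only [edges_cons, List.countP_cons, Nat.even_add, ih]

theorem even_countP_edges_of_forall_isCycle
    (hcyc : ∀ (w : V) (c : G.Walk w w), c.IsCycle → Even (c.edges.countP ρ))
    {u : V} (c : G.Walk u u) : Even (c.edges.countP ρ) := by
  classical
  rw [← even_countP_edges_bypass_iff hcyc, isPath_iff_nil.mp c.bypass_isPath |>.eq_nil]
  simp

theorem even_countP_edges_iff_of_forall_isCycle
    (hcyc : ∀ (w : V) (c : G.Walk w w), c.IsCycle → Even (c.edges.countP ρ))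
    {u v : V} (p q : G.Walk u v) : Even (p.edges.countP ρ) ↔ Even (q.edges.countP ρ) := by
  have h := even_countP_edges_of_forall_isCycle hcyc (p.append q.reverse)
  rwa [edges_append, edges_reverse, List.countP_append, List.countP_reverse, Nat.even_add] at h

theorem even_countP_edges_iff_of_eq_xor {sw : V → Bool}
    (hsw : ∀ u v : V, G.Adj u v → ρ s(u, v) = (sw u ^^ sw v)) {u v : V} (p : G.Walk u v) :
    Even (p.edges.countP ρ) ↔ sw u = sw v := by
  induction p with
  | nil => simp
  | @cons u w v h p ih =>
    rw [edges_cons, List.countP_cons, hsw u w h, Nat.even_add, ih]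
    cases sw u <;> cases sw v <;> cases sw w <;> decide

end SimpleGraph.Walk

open SimpleGraph.Walk in
theorem SimpleGraph.exists_eq_xor_iff_forall_isCycle_even {V : Type*} (G : SimpleGraph V)
    (ρ : Sym2 V → Bool) :
    (∃ sw : V → Bool, ∀ u v : V, G.Adj u v → ρ s(u, v) = (sw u ^^ sw v)) ↔
      ∀ (u : V) (c : G.Walk u u), c.IsCycle → Even (c.edges.countP ρ) := by
  constructor
  · rintro ⟨sw, hsw⟩ u c -
    exact (even_countP_edges_iff_of_eq_xor hsw c).mpr rfl
  · intro hcyc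
    let root : V → V := fun v => (G.connectedComponentMk v).out
    have hroot : ∀ v, G.connectedComponentMk v = G.connectedComponentMk (root v) :=
      fun v => (G.connectedComponentMk v).out_eq.symm
    let W : ∀ v, G.Walk v (root v) := fun v => (ConnectedComponent.exact (hroot v)).some
    refine ⟨fun v => !decide (Even ((W v).edges.countP ρ)), fun u v h => ?_⟩
    have hroot_eq : root v = root u := by
      simp only [root, ConnectedComponent.connectedComponentMk_eq_of_adj h]
    have key := even_countP_edges_iff_of_forall_isCycle hcyc (W u)
      ((cons h (W v)).copy rfl hroot_eq)
    rw [edges_copy, edges_cons, List.countP_cons, Nat.even_add] at key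
    cases hρ : ρ s(u, v) <;> rw [hρ] at key <;> by_cases hu : Even ((W u).edges.countP ρ) <;>
      by_cases hv : Even ((W v).edges.countP ρ) <;> simp [hu, hv] at key ⊢

theorem switching_equiv_iff_same_negative_cycles_general {V : Type}
    (G : SimpleGraph V) (σ τ : Sym2 V → Bool) :
    SwEquiv G σ τ ↔
      ∀ (u : V) (w : G.Walk u u), w.IsCycle →
        (Odd (w.edges.countP fun e => !σ e) ↔ Odd (w.edges.countP fun e => !τ e)) := by
  simp only [List.odd_countP_not_iff_iff_even_countP_xor]
  rw [← G.exists_eq_xor_iff_forall_isCycle_even]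
  refine exists_congr fun sw => forall₃_congr fun u v _ => ?_
  cases σ s(u, v) <;> cases τ s(u, v) <;> cases sw u <;> cases sw v <;> decide

/-- Two signatures on the same graph are switching equivalent iff they
have the same set of negative cycles (a cycle is negative iff the number of its
negative edges is odd). -/
theorem switching_equiv_iff_same_negative_cycles {V : Type} [Fintype V]
    (G : SimpleGraph V) (σ τ : Sym2 V → Bool) :
    SwEquiv G σ τ ↔
      ∀ (u : V) (w : G.Walk u u), w.IsCycle →
        (Odd (w.edges.countP fun e => !σ e) ↔ Odd (w.edges.countP fun e => !τ e)) :=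
  switching_equiv_iff_same_negative_cycles_general G σ τ
end

section
/- A signed graph (G, σ) admits a switching homomorphism to (H, π) if and only if it admits an edge-sign preserving homomorphism to DSG(H, π). -/
/-- A signed graph: two symmetric edge relations (positive and negative edges).
Parallel edges of different signs (digons) and negative loops are representable;
positive loops are disallowed (graphs in the paper have no loops unless specified,
loops occurring in circular cliques are always negative). -/
structure SGraph (V : Type) where
  pos : V → V → Prop
  neg : V → V → Prop
  pos_symm : ∀ u v, pos u v → pos v u
  neg_symm : ∀ u v, neg u v → neg v u
  pos_irrefl : ∀ v, ¬ pos v v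

namespace SGraph

variable {V W : Type}

/-- An edge-sign preserving homomorphism: preserves adjacency and edge signs. -/
def IsSpHom (G : SGraph V) (H : SGraph W) (f : V → W) : Prop :=
  (∀ u v, G.pos u v → H.pos (f u) (f v)) ∧ (∀ u v, G.neg u v → H.neg (f u) (f v))

/-- The signed graph obtained from `G` by switching at the set of vertices where `s` is `true`:
the sign of an edge is flipped exactly when its endpoints get different values of `s`. -/
def switch (G : SGraph V) (s : V → Bool) : SGraph V where
  pos u v := (s u = s v ∧ G.pos u v) ∨ (s u ≠ s v ∧ G.neg u v)
  neg u v := (s u = s v ∧ G.neg u v) ∨ (s u ≠ s v ∧ G.pos u v)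
  pos_symm := by
    rintro u v (⟨h, hp⟩ | ⟨h, hn⟩)
    · exact Or.inl ⟨h.symm, G.pos_symm u v hp⟩
    · exact Or.inr ⟨fun e => h e.symm, G.neg_symm u v hn⟩
  neg_symm := by
    rintro u v (⟨h, hn⟩ | ⟨h, hp⟩)
    · exact Or.inl ⟨h.symm, G.neg_symm u v hn⟩
    · exact Or.inr ⟨fun e => h e.symm, G.pos_symm u v hp⟩
  pos_irrefl := by
    rintro v (⟨_, hp⟩ | ⟨h, _⟩)
    · exact G.pos_irrefl v hp
    · exact h rfl

/-- A switching homomorphism: an edge-sign preserving homomorphism after switching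
at a suitable set of vertices of the source (equivalently, a vertex map preserving
adjacency and the signs of closed walks). -/
def SwHom (G : SGraph V) (H : SGraph W) : Prop :=
  ∃ (s : V → Bool) (f : V → W), (G.switch s).IsSpHom H f

/-- The underlying graph of the signed graph is bipartite. -/
def Bipartite (G : SGraph V) : Prop :=
  ∃ c : V → Bool, ∀ u v, G.pos u v ∨ G.neg u v → c u ≠ c v

end SGraph

/-- `x` reduced modulo `r` into `[0, r)` (for `r > 0`). -/
noncomputable def rmod (x r : ℝ) : ℝ := x - r * ⌊x / r⌋

/-- The circular distance between the points `x` and `y` of the circle of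
circumference `r` (the length of the shorter arc joining them). -/
noncomputable def cdist (r x y : ℝ) : ℝ := min (rmod (x - y) r) (rmod (y - x) r)

namespace SGraph

variable {V : Type}

/-- A circular `r`-coloring of a signed graph: vertices get points of a circle of
circumference `r` such that the endpoints of each positive edge are at circular
distance at least `1`, and each endpoint of a negative edge is at circular distance
at least `1` from the antipode of the other endpoint (equivalently, the endpoints of
a negative edge are at circular distance at most `r/2 - 1`). -/
def IsCircColoring (G : SGraph V) (r : ℝ) (φ : V → ℝ) : Prop :=
  (∀ u v, G.pos u v → 1 ≤ cdist r (φ u) (φ v)) ∧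
  (∀ u v, G.neg u v → 1 ≤ cdist r (φ u) (φ v + r / 2))

/-- The circular chromatic number of a signed graph. -/
noncomputable def circChrom (G : SGraph V) : ℝ :=
  sInf {r : ℝ | 1 ≤ r ∧ ∃ φ : V → ℝ, G.IsCircColoring r φ}

end SGraph

/-- The Double Switch Graph `DSG(H, π)`: two disjoint copies of `(H, π)`, where for
every positive (resp. negative) edge `xy` of `(H, π)` the cross edges `x₁y₂`, `x₂y₁`
are negative (resp. positive). -/
def DSG {W : Type} (H : SGraph W) : SGraph (W × Bool) where
  pos x y := (x.2 = y.2 ∧ H.pos x.1 y.1) ∨ (x.2 ≠ y.2 ∧ H.neg x.1 y.1)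
  neg x y := (x.2 = y.2 ∧ H.neg x.1 y.1) ∨ (x.2 ≠ y.2 ∧ H.pos x.1 y.1)
  pos_symm := by
    rintro x y (⟨h, hp⟩ | ⟨h, hn⟩)
    · exact Or.inl ⟨h.symm, H.pos_symm _ _ hp⟩
    · exact Or.inr ⟨fun e => h e.symm, H.neg_symm _ _ hn⟩
  neg_symm := by
    rintro x y (⟨h, hn⟩ | ⟨h, hp⟩)
    · exact Or.inl ⟨h.symm, H.neg_symm _ _ hn⟩
    · exact Or.inr ⟨fun e => h e.symm, H.pos_symm _ _ hp⟩
  pos_irrefl := by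
    rintro v (⟨_, hp⟩ | ⟨h, _⟩)
    · exact H.pos_irrefl _ hp
    · exact h rfl

/-- `(G,σ)` admits a switching homomorphism to `(H,π)` iff it admits an
edge-sign preserving homomorphism to `DSG(H,π)`. -/
theorem swHom_iff_spHom_DSG {V W : Type} (G : SGraph V) (H : SGraph W) :
    G.SwHom H ↔ ∃ f : V → W × Bool, G.IsSpHom (DSG H) f := by
  constructor
  · rintro ⟨s, f, hp, hn⟩
    refine ⟨fun v => (f v, s v), ?_, ?_⟩
    · intro u v huv
      by_cases h : s u = s v
      · exact Or.inl ⟨h, hp u v (Or.inl ⟨h, huv⟩)⟩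
      · exact Or.inr ⟨h, hn u v (Or.inr ⟨h, huv⟩)⟩
    · intro u v huv
      by_cases h : s u = s v
      · exact Or.inl ⟨h, hn u v (Or.inl ⟨h, huv⟩)⟩
      · exact Or.inr ⟨h, hp u v (Or.inr ⟨h, huv⟩)⟩
  · rintro ⟨f, hp, hn⟩
    refine ⟨fun v => (f v).2, fun v => (f v).1, ?_, ?_⟩
    · rintro u v (⟨h, huv⟩ | ⟨h, huv⟩)
      · rcases hp u v huv with ⟨_, h'⟩ | ⟨he, _⟩
        · exact h'
        · exact absurd h he
      · rcases hn u v huv with ⟨he, _⟩ | ⟨_, h'⟩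
        · exact absurd he h
        · exact h'
    · rintro u v (⟨h, huv⟩ | ⟨h, huv⟩)
      · rcases hn u v huv with ⟨_, h'⟩ | ⟨he, _⟩
        · exact h'
        · exact absurd h he
      · rcases hp u v huv with ⟨he, _⟩ | ⟨_, h'⟩
        · exact absurd he h
        · exact h'
end

section
/- For graphs G and H, there is a graph homomorphism G → H if and only if there is a switching homomorphism S(G) → S(H). -/
/-- Positive edges of `S(G)`: for each edge `ab` of `G` there are two new vertices
`Sum.inr (a, b)` and `Sum.inr (b, a)`, each joined to both `a` and `b`;
`WellOrderingRel` breaks the symmetry so that each of the resulting 4-cycles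
carries exactly one negative edge (hence is a negative 4-cycle). -/
def SConstPos {V : Type} (G : SimpleGraph V) (x y : V ⊕ V × V) : Prop :=
  ∃ w a b : V, G.Adj a b ∧ (w = a ∨ (w = b ∧ ¬ WellOrderingRel a b)) ∧
    ((x = Sum.inl w ∧ y = Sum.inr (a, b)) ∨ (y = Sum.inl w ∧ x = Sum.inr (a, b)))

/-- Negative edges of `S(G)`. -/
def SConstNeg {V : Type} (G : SimpleGraph V) (x y : V ⊕ V × V) : Prop :=
  ∃ w a b : V, G.Adj a b ∧ w = b ∧ WellOrderingRel a b ∧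
    ((x = Sum.inl w ∧ y = Sum.inr (a, b)) ∨ (y = Sum.inl w ∧ x = Sum.inr (a, b)))

/-- The construction `S(G)`: the signed bipartite graph obtained from `G` by replacing
every edge of `G` by a negative 4-cycle through two new vertices. -/
def SConst {V : Type} (G : SimpleGraph V) : SGraph (V ⊕ V × V) where
  pos := SConstPos G
  neg := SConstNeg G
  pos_symm := by
    rintro x y ⟨w, a, b, hab, hw, (⟨h1, h2⟩ | ⟨h1, h2⟩)⟩
    · exact ⟨w, a, b, hab, hw, Or.inr ⟨h1, h2⟩⟩
    · exact ⟨w, a, b, hab, hw, Or.inl ⟨h1, h2⟩⟩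
  neg_symm := by
    rintro x y ⟨w, a, b, hab, hw, hr, (⟨h1, h2⟩ | ⟨h1, h2⟩)⟩
    · exact ⟨w, a, b, hab, hw, hr, Or.inr ⟨h1, h2⟩⟩
    · exact ⟨w, a, b, hab, hw, hr, Or.inl ⟨h1, h2⟩⟩
  pos_irrefl := by
    rintro v ⟨w, a, b, _, _, (⟨h1, h2⟩ | ⟨h1, h2⟩)⟩ <;> (subst h1; simp at h2)
section AuxSwHom
variable {V W : Type}

lemma wor_total {α : Type} {a b : α} (h : a ≠ b) :
    WellOrderingRel a b ∨ WellOrderingRel b a := by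
  rcases trichotomous_of WellOrderingRel a b with h1 | h1 | h1
  · exact Or.inl h1
  · exact absurd h1 h
  · exact Or.inr h1

lemma wor_asymm {α : Type} {a b : α} (h : WellOrderingRel a b) :
    ¬ WellOrderingRel b a := fun h' =>
  (irrefl_of WellOrderingRel a) (IsTrans.trans _ _ _ h h')

lemma parity (a b c d : Bool) (P1 N1 P2 N2 : Prop)
    (hx1 : ¬(P1 ∧ N1)) (hx2 : ¬(P2 ∧ N2))
    (h1 : if a = b then P1 else N1)
    (h2 : if c = b then N1 else P1)
    (h3 : if c = d then P2 else N2)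
    (h4 : if a = d then P2 else N2) : False := by
  cases a <;> cases b <;> cases c <;> cases d <;> simp_all

lemma parity2 (a b c d : Bool) (P1 N1 P2 N2 : Prop)
    (hx1 : ¬(P1 ∧ N1)) (hx2 : ¬(P2 ∧ N2))
    (h1 : if a = b then P1 else N1)
    (h2 : if a = d then P1 else N1)
    (h3 : if c = b then N2 else P2)
    (h4 : if c = d then P2 else N2) : False := by
  cases a <;> cases b <;> cases c <;> cases d <;> simp_all

lemma parity3 (a b c d : Bool) (P1 N1 P2 N2 : Prop)
    (hx1 : ¬(P1 ∧ N1)) (hx2 : ¬(P2 ∧ N2))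
    (h1 : if a = b then P1 else N1)
    (h2 : if a = d then N1 else P1)
    (h3 : if c = b then P2 else N2)
    (h4 : if c = d then P2 else N2) : False := by
  cases a <;> cases b <;> cases c <;> cases d <;> simp_all

lemma sconst_excl (G : SimpleGraph W) (x y : W ⊕ W × W) :
    ¬ (SConstPos G x y ∧ SConstNeg G x y) := by
  rintro ⟨⟨w, a, b, hab, hw, hor⟩, ⟨w', a', b', hab', rfl, hr', hor'⟩⟩
  rcases hor with ⟨rfl, rfl⟩ | ⟨rfl, rfl⟩ <;>
    rcases hor' with ⟨h1, h2⟩ | ⟨h1, h2⟩ <;> simp_all <;>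
  · obtain ⟨rfl, rfl⟩ := h2
    rcases hw with rfl | ⟨rfl, hn⟩
    · exact hab.ne h1.symm
    · exact hn hr'

lemma sconst_adj (G : SimpleGraph W) {x y : W ⊕ W × W}
    (h : SConstPos G x y ∨ SConstNeg G x y) :
    ∃ w a b, G.Adj a b ∧ (w = a ∨ w = b) ∧
      ((x = Sum.inl w ∧ y = Sum.inr (a, b)) ∨ (y = Sum.inl w ∧ x = Sum.inr (a, b))) := by
  rcases h with ⟨w, a, b, hab, hw, hor⟩ | ⟨w, a, b, hab, hw, _, hor⟩
  · exact ⟨w, a, b, hab, hw.imp id And.left, hor⟩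
  · exact ⟨w, a, b, hab, Or.inr hw, hor⟩
open Classical in
noncomputable def sFun (g : V → W) : (V ⊕ V × V) → Bool := fun x =>
  match x with
  | Sum.inl _ => false
  | Sum.inr p => if WellOrderingRel p.1 p.2 ∧ ¬ WellOrderingRel (g p.1) (g p.2)
      then true else false

open Classical in
noncomputable def fFun (g : V → W) : (V ⊕ V × V) → (W ⊕ W × W) := fun x =>
  match x with
  | Sum.inl v => Sum.inl (g v)
  | Sum.inr p => if WellOrderingRel p.1 p.2 ↔ WellOrderingRel (g p.1) (g p.2)
      then Sum.inr (g p.1, g p.2) else Sum.inr (g p.2, g p.1)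

lemma sFun_inl (g : V → W) (v : V) : sFun g (Sum.inl v) = false := rfl

open Classical in
lemma sFun_inr (g : V → W) (a b : V) :
    sFun g (Sum.inr (a, b)) =
      if WellOrderingRel a b ∧ ¬ WellOrderingRel (g a) (g b) then true else false := rfl

lemma fFun_inl (g : V → W) (v : V) : fFun g (Sum.inl v) = Sum.inl (g v) := rfl

open Classical in
lemma fFun_inr (g : V → W) (a b : V) :
    fFun g (Sum.inr (a, b)) =
      if WellOrderingRel a b ↔ WellOrderingRel (g a) (g b)
      then Sum.inr (g a, g b) else Sum.inr (g b, g a) := rfl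
-- switched sign positive, w = a
lemma k1 (H : SimpleGraph W) (g : V → W) {a b : V} (hab' : H.Adj (g a) (g b))
    (h : ¬(WellOrderingRel a b ∧ ¬ WellOrderingRel (g a) (g b))) :
    SConstPos H (fFun g (Sum.inl a)) (fFun g (Sum.inr (a, b))) := by
  rw [fFun_inl, fFun_inr]
  split_ifs with hiff
  · exact ⟨g a, g a, g b, hab', Or.inl rfl, Or.inl ⟨rfl, rfl⟩⟩
  · have hB : WellOrderingRel (g a) (g b) := by tauto
    exact ⟨g a, g b, g a, hab'.symm, Or.inr ⟨rfl, wor_asymm hB⟩, Or.inl ⟨rfl, rfl⟩⟩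

-- switched sign positive, w = b, ¬WOR a b
lemma k2 (H : SimpleGraph W) (g : V → W) {a b : V} (hab' : H.Adj (g a) (g b))
    (hA : ¬ WellOrderingRel a b) :
    SConstPos H (fFun g (Sum.inl b)) (fFun g (Sum.inr (a, b))) := by
  rw [fFun_inl, fFun_inr]
  split_ifs with hiff
  · exact ⟨g b, g a, g b, hab', Or.inr ⟨rfl, fun h => hA (hiff.mpr h)⟩, Or.inl ⟨rfl, rfl⟩⟩
  · exact ⟨g b, g b, g a, hab'.symm, Or.inl rfl, Or.inl ⟨rfl, rfl⟩⟩

-- switched negative, w = a, WOR a b, ¬WOR (g a) (g b)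
lemma k3 (H : SimpleGraph W) (g : V → W) {a b : V} (hab' : H.Adj (g a) (g b))
    (hA : WellOrderingRel a b) (hB : ¬ WellOrderingRel (g a) (g b)) :
    SConstNeg H (fFun g (Sum.inl a)) (fFun g (Sum.inr (a, b))) := by
  rw [fFun_inl, fFun_inr, if_neg (by tauto : ¬(WellOrderingRel a b ↔ WellOrderingRel (g a) (g b)))]
  exact ⟨g a, g b, g a, hab'.symm, rfl, (wor_total hab'.ne).resolve_left hB, Or.inl ⟨rfl, rfl⟩⟩

-- switched negative, w = b, WOR a b, WOR (g a) (g b)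
lemma k5 (H : SimpleGraph W) (g : V → W) {a b : V} (hab' : H.Adj (g a) (g b))
    (hA : WellOrderingRel a b) (hB : WellOrderingRel (g a) (g b)) :
    SConstNeg H (fFun g (Sum.inl b)) (fFun g (Sum.inr (a, b))) := by
  rw [fFun_inl, fFun_inr, if_pos (by tauto : WellOrderingRel a b ↔ WellOrderingRel (g a) (g b))]
  exact ⟨g b, g a, g b, hab', rfl, hB, Or.inl ⟨rfl, rfl⟩⟩

-- switched positive, w = b, WOR a b, ¬WOR (g a) (g b)
lemma k6 (H : SimpleGraph W) (g : V → W) {a b : V} (hab' : H.Adj (g a) (g b))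
    (hA : WellOrderingRel a b) (hB : ¬ WellOrderingRel (g a) (g b)) :
    SConstPos H (fFun g (Sum.inl b)) (fFun g (Sum.inr (a, b))) := by
  rw [fFun_inl, fFun_inr, if_neg (by tauto : ¬(WellOrderingRel a b ↔ WellOrderingRel (g a) (g b)))]
  exact ⟨g b, g b, g a, hab'.symm, Or.inl rfl, Or.inl ⟨rfl, rfl⟩⟩

open Classical in
lemma sFun_eq_iff (g : V → W) (v a b : V) :
    sFun g (Sum.inl v) = sFun g (Sum.inr (a, b)) ↔
      ¬(WellOrderingRel a b ∧ ¬ WellOrderingRel (g a) (g b)) := by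
  rw [sFun_inl, sFun_inr]
  split_ifs with h <;> simp [h]

lemma easy_dir (G : SimpleGraph V) (H : SimpleGraph W) (g : G →g H) :
    (SConst G).SwHom (SConst H) := by
  classical
  have hAdj : ∀ {a b : V}, G.Adj a b → H.Adj (g a) (g b) := fun h => g.map_adj h
  refine ⟨sFun g, fFun g, ?_, ?_⟩
  · rintro x y (⟨hse, ⟨w, a, b, hab, hw, (⟨rfl, rfl⟩ | ⟨rfl, rfl⟩)⟩⟩ |
        ⟨hsn, ⟨w, a, b, hab, hwb, hA, (⟨rfl, rfl⟩ | ⟨rfl, rfl⟩)⟩⟩)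
    · rcases hw with rfl | ⟨rfl, hA⟩
      · exact k1 H g (hAdj hab) ((sFun_eq_iff g w w b).mp hse)
      · exact k2 H g (hAdj hab) hA
    · rcases hw with rfl | ⟨rfl, hA⟩
      · exact (SConst H).pos_symm _ _ (k1 H g (hAdj hab) ((sFun_eq_iff g w w b).mp hse.symm))
      · exact (SConst H).pos_symm _ _ (k2 H g (hAdj hab) hA)
    · subst hwb
      have h2 := (sFun_eq_iff g w a w).not.mp hsn
      push_neg at h2
      exact k6 H g (hAdj hab) hA h2.2
    · subst hwb
      have h2 := (sFun_eq_iff g w a w).not.mp (Ne.symm hsn)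
      push_neg at h2
      exact (SConst H).pos_symm _ _ (k6 H g (hAdj hab) hA h2.2)
  · rintro x y (⟨hse, ⟨w, a, b, hab, hwb, hA, (⟨rfl, rfl⟩ | ⟨rfl, rfl⟩)⟩⟩ |
        ⟨hsn, ⟨w, a, b, hab, hw, (⟨rfl, rfl⟩ | ⟨rfl, rfl⟩)⟩⟩)
    · subst hwb
      have h2 := (sFun_eq_iff g w a w).mp hse
      have hB : WellOrderingRel (g a) (g w) := by tauto
      exact k5 H g (hAdj hab) hA hB
    · subst hwb
      have h2 := (sFun_eq_iff g w a w).mp hse.symm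
      have hB : WellOrderingRel (g a) (g w) := by tauto
      exact (SConst H).neg_symm _ _ (k5 H g (hAdj hab) hA hB)
    · have h2 := (sFun_eq_iff g w a b).not.mp hsn
      push_neg at h2
      rcases hw with rfl | ⟨rfl, hA⟩
      · exact k3 H g (hAdj hab) h2.1 h2.2
      · exact absurd h2.1 hA
    · have h2 := (sFun_eq_iff g w a b).not.mp (Ne.symm hsn)
      push_neg at h2
      rcases hw with rfl | ⟨rfl, hA⟩
      · exact (SConst H).neg_symm _ _ (k3 H g (hAdj hab) h2.1 h2.2)
      · exact absurd h2.1 hA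
lemma hard_dir (G : SimpleGraph V) (H : SimpleGraph W)
    (h : (SConst G).SwHom (SConst H)) : Nonempty (G →g H) := by
  classical
  obtain ⟨s, f, hpos, hneg⟩ := h
  have mk_pos : ∀ x y, SConstPos G x y →
      if s x = s y then SConstPos H (f x) (f y) else SConstNeg H (f x) (f y) := by
    intro x y hxy
    split_ifs with hs
    · exact hpos x y (Or.inl ⟨hs, hxy⟩)
    · exact hneg x y (Or.inr ⟨hs, hxy⟩)
  have mk_neg : ∀ x y, SConstNeg G x y →
      if s x = s y then SConstNeg H (f x) (f y) else SConstPos H (f x) (f y) := by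
    intro x y hxy
    split_ifs with hs
    · exact hneg x y (Or.inl ⟨hs, hxy⟩)
    · exact hpos x y (Or.inr ⟨hs, hxy⟩)
  have adj_img : ∀ x y, SConstPos G x y ∨ SConstNeg G x y →
      SConstPos H (f x) (f y) ∨ SConstNeg H (f x) (f y) := by
    rintro x y (hxy | hxy)
    · have := mk_pos x y hxy
      split_ifs at this
      · exact Or.inl this
      · exact Or.inr this
    · have := mk_neg x y hxy
      split_ifs at this
      · exact Or.inr this
      · exact Or.inl this
  set g : V → W := fun v => match f (Sum.inl v) with
    | Sum.inl x => x
    | Sum.inr p => p.1 with hg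
  refine ⟨⟨g, @fun u v huv => ?_⟩⟩
  have hne : u ≠ v := huv.ne
  -- the four edges of the 4-cycle on u, v
  have hUP : SConstPos G (Sum.inl u) (Sum.inr (u, v)) :=
    ⟨u, u, v, huv, Or.inl rfl, Or.inl ⟨rfl, rfl⟩⟩
  have hVQ : SConstPos G (Sum.inl v) (Sum.inr (v, u)) :=
    ⟨v, v, u, huv.symm, Or.inl rfl, Or.inl ⟨rfl, rfl⟩⟩
  have hVPadj : SConstPos G (Sum.inl v) (Sum.inr (u, v)) ∨
      SConstNeg G (Sum.inl v) (Sum.inr (u, v)) := by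
    by_cases hW : WellOrderingRel u v
    · exact Or.inr ⟨v, u, v, huv, rfl, hW, Or.inl ⟨rfl, rfl⟩⟩
    · exact Or.inl ⟨v, u, v, huv, Or.inr ⟨rfl, hW⟩, Or.inl ⟨rfl, rfl⟩⟩
  have hUQadj : SConstPos G (Sum.inl u) (Sum.inr (v, u)) ∨
      SConstNeg G (Sum.inl u) (Sum.inr (v, u)) := by
    by_cases hW : WellOrderingRel v u
    · exact Or.inr ⟨u, v, u, huv.symm, rfl, hW, Or.inl ⟨rfl, rfl⟩⟩
    · exact Or.inl ⟨u, v, u, huv.symm, Or.inr ⟨rfl, hW⟩, Or.inl ⟨rfl, rfl⟩⟩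
  cases hfu : f (Sum.inl u) with
  | inl x =>
    -- Case A: u lands on an original vertex
    obtain ⟨w1, a, b, hab, hw1, hor1⟩ := sconst_adj H (adj_img _ _ (Or.inl hUP))
    rcases hor1 with ⟨h1, hP⟩ | ⟨h1, h2⟩
    swap
    · rw [hfu] at h2; simp at h2
    rw [hfu] at h1
    obtain rfl : x = w1 := by injection h1
    obtain ⟨w2, a2, b2, hab2, hw2, hor2⟩ := sconst_adj H (adj_img _ _ hVPadj)
    rcases hor2 with ⟨hfv, h2⟩ | ⟨h1', h2⟩
    swap
    · rw [hP] at h1'; simp at h1'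
    rw [hP] at h2
    have hpr : a2 = a ∧ b2 = b := by simpa using h2.symm
    obtain ⟨rfl, rfl⟩ := hpr
    -- UQ
    obtain ⟨w3, a3, b3, hab3, hw3, hor3⟩ := sconst_adj H (adj_img _ _ hUQadj)
    rcases hor3 with ⟨h1', hQ⟩ | ⟨h1', h2'⟩
    swap
    · rw [hfu] at h2'; simp at h2'
    rw [hfu] at h1'
    obtain rfl : x = w3 := by injection h1'
    -- VQ
    obtain ⟨w4, a4, b4, hab4, hw4, hor4⟩ := sconst_adj H (adj_img _ _ (Or.inl hVQ))
    rcases hor4 with ⟨h1'', h2''⟩ | ⟨h1'', h2''⟩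
    swap
    · rw [hQ] at h1''; simp at h1''
    rw [hfv] at h1''
    obtain rfl : w2 = w4 := by injection h1''
    rw [hQ] at h2''
    have hpr : a4 = a3 ∧ b4 = b3 := by simpa using h2''.symm
    obtain ⟨rfl, rfl⟩ := hpr
    -- g values
    have hgoal : H.Adj (g u) (g v) ↔ H.Adj x w2 := by
      rw [hg]; simp only [hfu, hfv]
    rw [hgoal]
    by_cases hxy : x = w2
    · -- contradiction via parity
      exfalso
      subst hxy
      have hUP' := mk_pos _ _ hUP
      rw [hfu, hP] at hUP'
      have hVQ' := mk_pos _ _ hVQ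
      rw [hfv, hQ] at hVQ'
      by_cases hW : WellOrderingRel u v
      · have hVP' := mk_neg _ _ ⟨v, u, v, huv, rfl, hW, Or.inl ⟨rfl, rfl⟩⟩
        rw [hfv, hP] at hVP'
        have hUQ' := mk_pos _ _ ⟨u, v, u, huv.symm, Or.inr ⟨rfl, wor_asymm hW⟩, Or.inl ⟨rfl, rfl⟩⟩
        rw [hfu, hQ] at hUQ'
        exact parity (s (Sum.inl u)) (s (Sum.inr (u, v))) (s (Sum.inl v)) (s (Sum.inr (v, u)))
          _ _ _ _ (sconst_excl H _ _) (sconst_excl H _ _) hUP' hVP' hVQ' hUQ'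
      · have hW' := (wor_total hne).resolve_left hW
        have hVP' := mk_pos _ _ ⟨v, u, v, huv, Or.inr ⟨rfl, hW⟩, Or.inl ⟨rfl, rfl⟩⟩
        rw [hfv, hP] at hVP'
        have hUQ' := mk_neg _ _ ⟨u, v, u, huv.symm, rfl, hW', Or.inl ⟨rfl, rfl⟩⟩
        rw [hfu, hQ] at hUQ'
        exact parity (s (Sum.inl v)) (s (Sum.inr (v, u))) (s (Sum.inl u)) (s (Sum.inr (u, v)))
          _ _ _ _ (sconst_excl H _ _) (sconst_excl H _ _) hVQ' hUQ' hUP' hVP'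
    · -- w3 ≠ w4, both in {a, b}
      rcases hw1 with h | h <;> rw [h] <;> rcases hw2 with h' | h' <;> rw [h']
      · exact absurd (h.trans h'.symm) hxy
      · exact hab2
      · exact hab2.symm
      · exact absurd (h.trans h'.symm) hxy
  | inr p =>
    obtain ⟨c, d⟩ := p
    -- Case B: u lands on an edge vertex (c, d)
    obtain ⟨w1, a, b, hab, hw1, hor1⟩ := sconst_adj H (adj_img _ _ (Or.inl hUP))
    rcases hor1 with ⟨h1, h2⟩ | ⟨hP, h2⟩
    · rw [hfu] at h1; simp at h1
    rw [hfu] at h2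
    have hpr : c = a ∧ d = b := by simpa using h2
    obtain ⟨rfl, rfl⟩ := hpr
    -- VP
    obtain ⟨w2, e, f', hab2, hw2, hor2⟩ := sconst_adj H (adj_img _ _ hVPadj)
    rcases hor2 with ⟨h1', h2'⟩ | ⟨h1', hfv⟩
    · rw [hP] at h2'; simp at h2'
    rw [hP] at h1'
    obtain rfl : w1 = w2 := by injection h1'
    -- UQ
    obtain ⟨w3, a3, b3, hab3, hw3, hor3⟩ := sconst_adj H (adj_img _ _ hUQadj)
    rcases hor3 with ⟨h1'', h2''⟩ | ⟨hQ, h2''⟩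
    · rw [hfu] at h1''; simp at h1''
    rw [hfu] at h2''
    have hpr : c = a3 ∧ d = b3 := by simpa using h2''
    obtain ⟨hca3, hdb3⟩ := hpr
    subst hca3; subst hdb3
    -- VQ
    obtain ⟨w4, e4, f4, hab4, hw4, hor4⟩ := sconst_adj H (adj_img _ _ (Or.inl hVQ))
    rcases hor4 with ⟨h1''', h2'''⟩ | ⟨h1''', h2'''⟩
    · rw [hfv] at h1'''; simp at h1'''
    rw [hQ] at h1'''
    obtain rfl : w3 = w4 := by injection h1'''
    rw [hfv] at h2'''
    have hpr : e = e4 ∧ f' = f4 := by simpa using h2'''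
    obtain ⟨he4, hf4⟩ := hpr
    subst he4; subst hf4
    -- now: hP : f (inr (u,v)) = inl w1, hQ : f (inr (v,u)) = inl w3,
    -- hfu : f (inl u) = inr (c,d), hfv : f (inl v) = inr (e, f'),
    -- hw1 : w1 = c ∨ w1 = d, hw1 : w1 = e ∨ w1 = f', hw3 : w3 = c ∨ w3 = d, hw3 : w3 = e ∨ w3 = f'
    have hgoal : H.Adj (g u) (g v) ↔ H.Adj c e := by
      rw [hg]; simp only [hfu, hfv]
    rw [hgoal]
    -- claim 1: ¬(e = c ∧ f' = d)
    have hne1 : ¬(e = c ∧ f' = d) := by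
      rintro ⟨h5, h6⟩
      rw [h5, h6] at hfv
      have hUP' := mk_pos _ _ hUP
      rw [hfu, hP] at hUP'
      have hVQ' := mk_pos _ _ hVQ
      rw [hfv, hQ] at hVQ'
      by_cases hW : WellOrderingRel u v
      · have hVP' := mk_neg _ _ ⟨v, u, v, huv, rfl, hW, Or.inl ⟨rfl, rfl⟩⟩
        rw [hfv, hP] at hVP'
        have hUQ' := mk_pos _ _ ⟨u, v, u, huv.symm, Or.inr ⟨rfl, wor_asymm hW⟩, Or.inl ⟨rfl, rfl⟩⟩
        rw [hfu, hQ] at hUQ'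
        exact parity (s (Sum.inl u)) (s (Sum.inr (u, v))) (s (Sum.inl v)) (s (Sum.inr (v, u)))
          _ _ _ _ (sconst_excl H _ _) (sconst_excl H _ _) hUP' hVP' hVQ' hUQ'
      · have hW' := (wor_total hne).resolve_left hW
        have hVP' := mk_pos _ _ ⟨v, u, v, huv, Or.inr ⟨rfl, hW⟩, Or.inl ⟨rfl, rfl⟩⟩
        rw [hfv, hP] at hVP'
        have hUQ' := mk_neg _ _ ⟨u, v, u, huv.symm, rfl, hW', Or.inl ⟨rfl, rfl⟩⟩
        rw [hfu, hQ] at hUQ'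
        exact parity (s (Sum.inl v)) (s (Sum.inr (v, u))) (s (Sum.inl u)) (s (Sum.inr (u, v)))
          _ _ _ _ (sconst_excl H _ _) (sconst_excl H _ _) hVQ' hUQ' hUP' hVP'
    -- claim 2: w1 ≠ w3
    have hne2 : w1 ≠ w3 := by
      rintro rfl
      have hUP' := mk_pos _ _ hUP
      rw [hfu, hP] at hUP'
      have hVQ' := mk_pos _ _ hVQ
      rw [hfv, hQ] at hVQ'
      by_cases hW : WellOrderingRel u v
      · have hVP' := mk_neg _ _ ⟨v, u, v, huv, rfl, hW, Or.inl ⟨rfl, rfl⟩⟩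
        rw [hfv, hP] at hVP'
        have hUQ' := mk_pos _ _ ⟨u, v, u, huv.symm, Or.inr ⟨rfl, wor_asymm hW⟩, Or.inl ⟨rfl, rfl⟩⟩
        rw [hfu, hQ] at hUQ'
        exact parity2 (s (Sum.inl u)) (s (Sum.inr (u, v))) (s (Sum.inl v)) (s (Sum.inr (v, u)))
          _ _ _ _ (sconst_excl H _ _) (sconst_excl H _ _) hUP' hUQ' hVP' hVQ'
      · have hW' := (wor_total hne).resolve_left hW
        have hVP' := mk_pos _ _ ⟨v, u, v, huv, Or.inr ⟨rfl, hW⟩, Or.inl ⟨rfl, rfl⟩⟩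
        rw [hfv, hP] at hVP'
        have hUQ' := mk_neg _ _ ⟨u, v, u, huv.symm, rfl, hW', Or.inl ⟨rfl, rfl⟩⟩
        rw [hfu, hQ] at hUQ'
        exact parity3 (s (Sum.inl u)) (s (Sum.inr (u, v))) (s (Sum.inl v)) (s (Sum.inr (v, u)))
          _ _ _ _ (sconst_excl H _ _) (sconst_excl H _ _) hUP' hUQ' hVP' hVQ'
    have hcd : c ≠ d := hab.ne
    have hed : e = d := by
      rcases hw1 with h1 | h1
      · have h2 : w3 = d := by
          rcases hw3 with h2 | h2
          · exact absurd (h1.trans h2.symm) hne2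
          · exact h2
        rcases hw2 with h3 | h3
        · rcases hw4 with h4 | h4
          · exact h4.symm.trans h2
          · exact absurd ⟨h3.symm.trans h1, h4.symm.trans h2⟩ hne1
        · rcases hw4 with h4 | h4
          · exact h4.symm.trans h2
          · exact absurd ((h3.symm.trans h1).symm.trans (h4.symm.trans h2)) hcd
      · have h2 : w3 = c := by
          rcases hw3 with h2 | h2
          · exact h2
          · exact absurd (h1.trans h2.symm) hne2
        rcases hw2 with h3 | h3
        · exact h3.symm.trans h1
        · rcases hw4 with h4 | h4
          · exact absurd ⟨h4.symm.trans h2, h3.symm.trans h1⟩ hne1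
          · exact absurd ((h4.symm.trans h2).symm.trans (h3.symm.trans h1)) hcd
    rw [hed]
    exact hab
end AuxSwHom


/-- `G → H` (graph homomorphism) iff `S(G) → S(H)` (switching
homomorphism of signed graphs). -/
theorem hom_iff_SConst_swHom {V W : Type} (G : SimpleGraph V) (H : SimpleGraph W) :
    Nonempty (G →g H) ↔ (SConst G).SwHom (SConst H) := by
  constructor
  · rintro ⟨g⟩
    exact easy_dir G H g
  · intro h
    exact hard_dir G H h
end

section
/- For a graph G and an integer k ≥ 3, G is k-colorable if and only if S(G) admits a switching homomorphism to (K_{k,k}, M), the signed complete bipartite graph K_{k,k} whose negative edges form a perfect matching. -/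
/-- The signed graph `(K_{k,k}, M)`: the complete bipartite graph `K_{k,k}` whose
negative edges form a perfect matching (the edges `inl i — inr i`). -/
def KkkM (k : ℕ) : SGraph (Fin k ⊕ Fin k) where
  pos x y := ∃ i j : Fin k, i ≠ j ∧
    ((x = Sum.inl i ∧ y = Sum.inr j) ∨ (y = Sum.inl i ∧ x = Sum.inr j))
  neg x y := ∃ i : Fin k, (x = Sum.inl i ∧ y = Sum.inr i) ∨ (y = Sum.inl i ∧ x = Sum.inr i)
  pos_symm := by
    rintro x y ⟨i, j, hij, (⟨h1, h2⟩ | ⟨h1, h2⟩)⟩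
    · exact ⟨i, j, hij, Or.inr ⟨h1, h2⟩⟩
    · exact ⟨i, j, hij, Or.inl ⟨h1, h2⟩⟩
  neg_symm := by
    rintro x y ⟨i, (⟨h1, h2⟩ | ⟨h1, h2⟩)⟩
    · exact ⟨i, Or.inr ⟨h1, h2⟩⟩
    · exact ⟨i, Or.inl ⟨h1, h2⟩⟩
  pos_irrefl := by
    rintro v ⟨i, j, _, (⟨h1, h2⟩ | ⟨h1, h2⟩)⟩ <;> (subst h1; simp at h2)


private lemma exists_third {k : ℕ} (hk : 3 ≤ k) (i j : Fin k) :
    ∃ m : Fin k, m ≠ i ∧ m ≠ j := by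
  by_contra h
  push_neg at h
  have hsub : (Finset.univ : Finset (Fin k)) ⊆ {i, j} := by
    intro m _
    simp only [Finset.mem_insert, Finset.mem_singleton]
    by_contra hm
    push_neg at hm
    exact hm.2 (h m hm.1)
  have h1 := Finset.card_le_card hsub
  simp only [Finset.card_univ, Fintype.card_fin] at h1
  have h2 : ({i, j} : Finset (Fin k)).card ≤ 2 :=
    (Finset.card_insert_le _ _).trans (by simp)
  omega

private lemma KkkM_pos_idx {k : ℕ} {p q : Fin k ⊕ Fin k} (h : (KkkM k).pos p q) :
    Sum.elim id id p ≠ Sum.elim id id q := by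
  obtain ⟨i, j, hij, (⟨h1, h2⟩ | ⟨h1, h2⟩)⟩ := h <;> subst h1 <;> subst h2 <;> simpa using
    by first | exact hij | exact hij.symm

private lemma KkkM_neg_idx {k : ℕ} {p q : Fin k ⊕ Fin k} (h : (KkkM k).neg p q) :
    Sum.elim id id p = Sum.elim id id q := by
  obtain ⟨i, (⟨h1, h2⟩ | ⟨h1, h2⟩)⟩ := h <;> subst h1 <;> subst h2 <;> simp

open Classical in
/-- The color assigned to the subdivision vertex `inr (a, b)`. -/
noncomputable def auxg {V : Type} (G : SimpleGraph V) {k : ℕ} (hk : 3 ≤ k)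
    (C : V → Fin k) (a b : V) : Fin k :=
  if G.Adj a b ∧ WellOrderingRel a b then C b
  else Classical.choose (exists_third hk (C a) (C b))

private lemma auxg_pos {V : Type} {G : SimpleGraph V} {k : ℕ} (hk : 3 ≤ k)
    (C : V → Fin k) {a b : V} (hab : G.Adj a b) (hw : WellOrderingRel a b) :
    auxg G hk C a b = C b := by
  classical
  simp [auxg, hab, hw]

/-- for `k ≥ 3`, `χ(G) ≤ k` iff `S(G)` admits a switching homomorphism
to `(K_{k,k}, M)`. -/
theorem colorable_iff_SConst_to_KkkM {V : Type} (G : SimpleGraph V) (k : ℕ)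
    (hk : 3 ≤ k) : G.Colorable k ↔ (SConst G).SwHom (KkkM k) := by
  classical
  constructor
  · rintro ⟨C⟩
    refine ⟨fun _ => false,
      Sum.elim (fun v => Sum.inl (C v)) (fun p => Sum.inr (auxg G hk C p.1 p.2)), ?_, ?_⟩
    · rintro u v (⟨_, hp⟩ | ⟨hne, _⟩)
      · obtain ⟨w, a, b, hab, hw, hxy⟩ := hp
        have hne' : C w ≠ auxg G hk C a b := by
          rcases hw with heq | ⟨heq, hnw⟩
          · rw [heq]
            by_cases h : WellOrderingRel a b
            · rw [auxg_pos hk C hab h]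
              exact C.valid hab
            · have hcond : ¬ (G.Adj a b ∧ WellOrderingRel a b) := fun hh => h hh.2
              rw [auxg, if_neg hcond]
              exact (Classical.choose_spec (exists_third hk (C a) (C b))).1.symm
          · rw [heq]
            have hcond : ¬ (G.Adj a b ∧ WellOrderingRel a b) := fun hh => hnw hh.2
            rw [auxg, if_neg hcond]
            exact (Classical.choose_spec (exists_third hk (C a) (C b))).2.symm
        rcases hxy with ⟨rfl, rfl⟩ | ⟨rfl, rfl⟩
        · exact ⟨C w, auxg G hk C a b, hne', Or.inl ⟨rfl, rfl⟩⟩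
        · exact ⟨C w, auxg G hk C a b, hne', Or.inr ⟨rfl, rfl⟩⟩
      · exact absurd rfl hne
    · rintro u v (⟨_, hn⟩ | ⟨hne, _⟩)
      · obtain ⟨w, a, b, hab, heq, hw, hxy⟩ := hn
        have hg : auxg G hk C a b = C w := by rw [heq]; exact auxg_pos hk C hab hw
        rcases hxy with ⟨rfl, rfl⟩ | ⟨rfl, rfl⟩
        · exact ⟨C w, Or.inl ⟨rfl, by simp [hg]⟩⟩
        · exact ⟨C w, Or.inr ⟨rfl, by simp [hg]⟩⟩
      · exact absurd rfl hne
  · rintro ⟨s, f, hp, hn⟩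
    have keyP : ∀ u v, SConstPos G u v →
        (Sum.elim id id (f u) = Sum.elim id id (f v) ↔ s u ≠ s v) := by
      intro u v e
      by_cases h : s u = s v
      · simpa [h] using KkkM_pos_idx (hp u v (Or.inl ⟨h, e⟩))
      · simpa [h] using KkkM_neg_idx (hn u v (Or.inr ⟨h, e⟩))
    have keyN : ∀ u v, SConstNeg G u v →
        (Sum.elim id id (f u) = Sum.elim id id (f v) ↔ s u = s v) := by
      intro u v e
      by_cases h : s u = s v
      · simpa [h] using KkkM_neg_idx (hn u v (Or.inl ⟨h, e⟩))
      · simpa [h] using KkkM_pos_idx (hp u v (Or.inr ⟨h, e⟩))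
    have key : ∀ a b : V, G.Adj a b → WellOrderingRel a b →
        Sum.elim id id (f (Sum.inl a)) ≠ Sum.elim id id (f (Sum.inl b)) := by
      intro a b hab hw hceq
      have e1 : SConstPos G (Sum.inl a) (Sum.inr (a, b)) :=
        ⟨a, a, b, hab, Or.inl rfl, Or.inl ⟨rfl, rfl⟩⟩
      have e2 : SConstNeg G (Sum.inl b) (Sum.inr (a, b)) :=
        ⟨b, a, b, hab, rfl, hw, Or.inl ⟨rfl, rfl⟩⟩
      have e3 : SConstPos G (Sum.inl b) (Sum.inr (b, a)) :=
        ⟨b, b, a, hab.symm, Or.inl rfl, Or.inl ⟨rfl, rfl⟩⟩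
      have e4 : SConstPos G (Sum.inl a) (Sum.inr (b, a)) :=
        ⟨a, b, a, hab.symm, Or.inr ⟨rfl, asymm hw⟩, Or.inl ⟨rfl, rfl⟩⟩
      have k1 := keyP _ _ e1
      have k2 := keyN _ _ e2
      have k3 := keyP _ _ e3
      have k4 := keyP _ _ e4
      rw [hceq] at k1 k4
      have h12 := k1.symm.trans k2
      have h34 := k4.symm.trans k3
      revert h12 h34
      cases s (Sum.inl a) <;> cases s (Sum.inl b) <;>
        cases s (Sum.inr (a, b)) <;> cases s (Sum.inr (b, a)) <;> decide
    refine ⟨⟨fun v => Sum.elim id id (f (Sum.inl v)), ?_⟩⟩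
    intro a b hab
    rcases trichotomous (r := WellOrderingRel) a b with h | h | h
    · exact key a b hab h
    · exact absurd h hab.ne
    · exact (key b a hab.symm h).symm
end

section
/- A graph G is 2-colorable (bipartite) if and only if S(G) admits a switching homomorphism to (K_{2,2}, e), the 4-cycle with exactly one negative edge. -/
/-- The signed graph `(K_{2,2}, e)`: a 4-cycle with exactly one negative edge
(the edge between `inl 0` and `inr 0`). -/
def K22e : SGraph (Fin 2 ⊕ Fin 2) where
  pos x y := ∃ i j : Fin 2, ¬(i = 0 ∧ j = 0) ∧
    ((x = Sum.inl i ∧ y = Sum.inr j) ∨ (y = Sum.inl i ∧ x = Sum.inr j))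
  neg x y := (x = Sum.inl (0 : Fin 2) ∧ y = Sum.inr (0 : Fin 2)) ∨
    (y = Sum.inl (0 : Fin 2) ∧ x = Sum.inr (0 : Fin 2))
  pos_symm := by
    rintro x y ⟨i, j, hij, (⟨h1, h2⟩ | ⟨h1, h2⟩)⟩
    · exact ⟨i, j, hij, Or.inr ⟨h1, h2⟩⟩
    · exact ⟨i, j, hij, Or.inl ⟨h1, h2⟩⟩
  neg_symm := by
    rintro x y (⟨h1, h2⟩ | ⟨h1, h2⟩)
    · exact Or.inr ⟨h1, h2⟩
    · exact Or.inl ⟨h1, h2⟩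
  pos_irrefl := by
    rintro v ⟨i, j, _, (⟨h1, h2⟩ | ⟨h1, h2⟩)⟩ <;> (subst h1; simp at h2)

section Aux

open Classical in
/-- Switching function for the forward direction. -/
noncomputable def auxS {V : Type} (c : V → Fin 2) : V ⊕ V × V → Bool
  | Sum.inl _ => false
  | Sum.inr (a, b) => if WellOrderingRel a b ∧ c b = 1 then true else false

open Classical in
/-- Vertex map for the forward direction. -/
noncomputable def auxF {V : Type} (c : V → Fin 2) : V ⊕ V × V → Fin 2 ⊕ Fin 2
  | Sum.inl v => Sum.inl (c v)
  | Sum.inr (a, b) => Sum.inr (if WellOrderingRel a b then 0 else 1)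

instance : DecidableRel K22e.pos := fun u v =>
  decidable_of_iff (∃ i j : Fin 2, ¬(i = 0 ∧ j = 0) ∧
    ((u = Sum.inl i ∧ v = Sum.inr j) ∨ (v = Sum.inl i ∧ u = Sum.inr j))) Iff.rfl

instance : DecidableRel K22e.neg := fun u v =>
  decidable_of_iff ((u = Sum.inl (0 : Fin 2) ∧ v = Sum.inr (0 : Fin 2)) ∨
    (v = Sum.inl (0 : Fin 2) ∧ u = Sum.inr (0 : Fin 2))) Iff.rfl

/-- Index of a vertex of `K22e`. -/
def toIdx : Fin 2 ⊕ Fin 2 → Fin 2 := Sum.elim id id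

set_option maxHeartbeats 1000000 in
theorem key_parity : ∀ (u v w z : Fin 2 ⊕ Fin 2) (b1 b2 b3 b4 : Bool),
    (xor (xor b1 b2) (xor b3 b4) = false) →
    (if b1 = true then K22e.pos u w else K22e.neg u w) →
    (if b2 = true then K22e.pos u z else K22e.neg u z) →
    (if b3 = true then K22e.pos v z else K22e.neg v z) →
    (if b4 = true then K22e.neg v w else K22e.pos v w) →
    toIdx u ≠ toIdx v := by decide

theorem wor_asymm_s5 {V : Type} {a b : V} (h1 : WellOrderingRel a b) (h2 : WellOrderingRel b a) :
    False := by
  have h3 : WellOrderingRel a a := _root_.trans h1 h2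
  exact irrefl_of WellOrderingRel a h3

end Aux

/-- `χ(G) ≤ 2` iff `S(G)` admits a switching homomorphism to
`(K_{2,2}, e)`. -/
theorem two_colorable_iff_SConst_to_K22e {V : Type} (G : SimpleGraph V) :
    G.Colorable 2 ↔ (SConst G).SwHom K22e := by
  classical
  constructor
  · rintro hcol
    obtain ⟨C⟩ := hcol
    set c : V → Fin 2 := fun v => C v with hcdef
    have hc : ∀ a b : V, G.Adj a b → c a ≠ c b := fun a b h => C.valid h
    have fin2 : ∀ x : Fin 2, x = 0 ∨ x = 1 := by decide
    have fin2' : ∀ x y : Fin 2, x ≠ y → y = 0 → x = 1 := by decide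
    refine ⟨auxS c, auxF c, ?_, ?_⟩
    · -- positive edges
      rintro u v h
      have mk : ∀ (i j : Fin 2), ¬(i = 0 ∧ j = 0) →
          K22e.pos (Sum.inl i) (Sum.inr j) := fun i j hij => ⟨i, j, hij, Or.inl ⟨rfl, rfl⟩⟩
      have main : ∀ w a b : V, G.Adj a b →
          ((auxS c (Sum.inl w) = auxS c (Sum.inr (a, b)) ∧
              (w = a ∨ (w = b ∧ ¬ WellOrderingRel a b))) ∨
           (auxS c (Sum.inl w) ≠ auxS c (Sum.inr (a, b)) ∧
              (w = b ∧ WellOrderingRel a b))) →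
          K22e.pos (auxF c (Sum.inl w)) (auxF c (Sum.inr (a, b))) := by
        rintro w a b hab (⟨hs, hw⟩ | ⟨hs, rfl, hr⟩)
        · by_cases hr : WellOrderingRel a b
          · have hsv : auxS c (Sum.inr (a, b)) = false := hs.symm
            simp only [auxS] at hsv
            have hcb : c b = 0 := by
              rcases fin2 (c b) with h0 | h1
              · exact h0
              · have hY : WellOrderingRel a b ∧ c b = 1 := ⟨hr, h1⟩
                rw [if_pos hY] at hsv
                exact absurd hsv (by decide)
            rcases hw with rfl | ⟨rfl, hnr⟩
            · have hca : c w = 1 := fin2' _ _ (hc w b hab) hcb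
              show K22e.pos (Sum.inl (c w)) (Sum.inr (if WellOrderingRel w b then 0 else 1))
              rw [if_pos hr, hca]
              exact mk _ _ (by decide)
            · exact absurd hr hnr
          · show K22e.pos (Sum.inl (c w)) (Sum.inr (if WellOrderingRel a b then 0 else 1))
            rw [if_neg hr]
            exact mk _ _ (fun hh => absurd hh.2 (by decide))
        · have hsv : auxS c (Sum.inr (a, w)) = true := by
            cases hv : auxS c (Sum.inr (a, w))
            · exact absurd (by rw [hv]; rfl) hs
            · rfl
          simp only [auxS] at hsv
          have hcb : c w = 1 := by
            by_contra hcb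
            rw [if_neg (fun hh => hcb hh.2)] at hsv
            exact absurd hsv (by decide)
          show K22e.pos (Sum.inl (c w)) (Sum.inr (if WellOrderingRel a w then 0 else 1))
          rw [if_pos hr, hcb]
          exact mk _ _ (by decide)
      rcases h with ⟨hs, w, a, b, hab, hw, (⟨rfl, rfl⟩ | ⟨rfl, rfl⟩)⟩ |
                    ⟨hs, w, a, b, hab, hw, hr, (⟨rfl, rfl⟩ | ⟨rfl, rfl⟩)⟩
      · exact main w a b hab (Or.inl ⟨hs, hw⟩)
      · exact K22e.pos_symm _ _ (main w a b hab (Or.inl ⟨hs.symm, hw⟩))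
      · exact main w a b hab (Or.inr ⟨hs, hw, hr⟩)
      · exact K22e.pos_symm _ _ (main w a b hab (Or.inr ⟨fun e => hs e.symm, hw, hr⟩))
    · -- negative edges
      rintro u v h
      have main : ∀ w a b : V, G.Adj a b →
          ((auxS c (Sum.inl w) = auxS c (Sum.inr (a, b)) ∧
              (w = b ∧ WellOrderingRel a b)) ∨
           (auxS c (Sum.inl w) ≠ auxS c (Sum.inr (a, b)) ∧
              (w = a ∨ (w = b ∧ ¬ WellOrderingRel a b)))) →
          K22e.neg (auxF c (Sum.inl w)) (auxF c (Sum.inr (a, b))) := by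
        rintro w a b hab (⟨hs, rfl, hr⟩ | ⟨hs, hw⟩)
        · have hsv : auxS c (Sum.inr (a, w)) = false := hs.symm
          simp only [auxS] at hsv
          have hcb : c w = 0 := by
            rcases fin2 (c w) with h0 | h1
            · exact h0
            · have hY : WellOrderingRel a w ∧ c w = 1 := ⟨hr, h1⟩
              rw [if_pos hY] at hsv
              exact absurd hsv (by decide)
          show K22e.neg (Sum.inl (c w)) (Sum.inr (if WellOrderingRel a w then 0 else 1))
          rw [if_pos hr, hcb]
          exact Or.inl ⟨rfl, rfl⟩
        · have hsv : auxS c (Sum.inr (a, b)) = true := by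
            cases hv : auxS c (Sum.inr (a, b))
            · exact absurd (by rw [hv]; rfl) hs
            · rfl
          simp only [auxS] at hsv
          have hcond : WellOrderingRel a b ∧ c b = 1 := by
            by_contra hcc
            rw [if_neg hcc] at hsv
            exact absurd hsv (by decide)
          rcases hw with rfl | ⟨rfl, hnr⟩
          · have hca : c w = 0 := by
              have hne := hc w b hab
              rw [hcond.2] at hne
              rcases fin2 (c w) with h0 | h1
              · exact h0
              · exact absurd h1 hne
            show K22e.neg (Sum.inl (c w)) (Sum.inr (if WellOrderingRel w b then 0 else 1))
            rw [if_pos hcond.1, hca]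
            exact Or.inl ⟨rfl, rfl⟩
          · exact absurd hcond.1 hnr
      rcases h with ⟨hs, w, a, b, hab, hw, hr, (⟨rfl, rfl⟩ | ⟨rfl, rfl⟩)⟩ |
                    ⟨hs, w, a, b, hab, hw, (⟨rfl, rfl⟩ | ⟨rfl, rfl⟩)⟩
      · exact main w a b hab (Or.inl ⟨hs, hw, hr⟩)
      · exact K22e.neg_symm _ _ (main w a b hab (Or.inl ⟨hs.symm, hw, hr⟩))
      · exact main w a b hab (Or.inr ⟨hs, hw⟩)
      · exact K22e.neg_symm _ _ (main w a b hab (Or.inr ⟨fun e => hs e.symm, hw⟩))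
  · rintro ⟨s, f, hpos, hneg⟩
    have main : ∀ a b : V, G.Adj a b → WellOrderingRel a b →
        toIdx (f (Sum.inl a)) ≠ toIdx (f (Sum.inl b)) := by
      intro a b hab hr
      set A := (Sum.inl a : V ⊕ V × V)
      set B := (Sum.inl b : V ⊕ V × V)
      set X := (Sum.inr (a, b) : V ⊕ V × V)
      set Y := (Sum.inr (b, a) : V ⊕ V × V)
      have hnr : ¬ WellOrderingRel b a := fun h => wor_asymm_s5 hr h
      have pAX : SConstPos G A X := ⟨a, a, b, hab, Or.inl rfl, Or.inl ⟨rfl, rfl⟩⟩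
      have pAY : SConstPos G A Y := ⟨a, b, a, hab.symm, Or.inr ⟨rfl, hnr⟩, Or.inl ⟨rfl, rfl⟩⟩
      have pBY : SConstPos G B Y := ⟨b, b, a, hab.symm, Or.inl rfl, Or.inl ⟨rfl, rfl⟩⟩
      have nBX : SConstNeg G B X := ⟨b, a, b, hab, rfl, hr, Or.inl ⟨rfl, rfl⟩⟩
      have h1 : if (s A == s X) = true then K22e.pos (f A) (f X) else K22e.neg (f A) (f X) := by
        by_cases h : s A = s X
        · rw [if_pos (by simp [h])]; exact hpos _ _ (Or.inl ⟨h, pAX⟩)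
        · rw [if_neg (by simp [h])]; exact hneg _ _ (Or.inr ⟨h, pAX⟩)
      have h2 : if (s A == s Y) = true then K22e.pos (f A) (f Y) else K22e.neg (f A) (f Y) := by
        by_cases h : s A = s Y
        · rw [if_pos (by simp [h])]; exact hpos _ _ (Or.inl ⟨h, pAY⟩)
        · rw [if_neg (by simp [h])]; exact hneg _ _ (Or.inr ⟨h, pAY⟩)
      have h3 : if (s B == s Y) = true then K22e.pos (f B) (f Y) else K22e.neg (f B) (f Y) := by
        by_cases h : s B = s Y
        · rw [if_pos (by simp [h])]; exact hpos _ _ (Or.inl ⟨h, pBY⟩)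
        · rw [if_neg (by simp [h])]; exact hneg _ _ (Or.inr ⟨h, pBY⟩)
      have h4 : if (s B == s X) = true then K22e.neg (f B) (f X) else K22e.pos (f B) (f X) := by
        by_cases h : s B = s X
        · rw [if_pos (by simp [h])]; exact hneg _ _ (Or.inl ⟨h, nBX⟩)
        · rw [if_neg (by simp [h])]; exact hpos _ _ (Or.inr ⟨h, nBX⟩)
      have hb : xor (xor (s A == s X) (s A == s Y)) (xor (s B == s Y) (s B == s X)) = false := by
        have hgen : ∀ p q r t : Bool,
            xor (xor (p == q) (p == t)) (xor (r == t) (r == q)) = false := by decide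
        exact hgen (s A) (s X) (s B) (s Y)
      exact key_parity (f A) (f B) (f X) (f Y) _ _ _ _ hb h1 h2 h3 h4
    refine ⟨SimpleGraph.Coloring.mk (fun v => toIdx (f (Sum.inl v))) ?_⟩
    intro a b hab
    rcases trichotomous_of WellOrderingRel a b with hr | hr | hr
    · exact main a b hab hr
    · exact absurd hr hab.ne
    · exact fun e => main b a hab.symm hr e.symm
end

section
/- A graph G satisfies χ_c(G) ≤ 3 if and only if χ_c(S(G)) ≤ 3. -/
/-- An ordinary graph viewed as a signed graph all of whose edges are positive;
its circular chromatic number is the usual circular chromatic number of the graph. -/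
def toPos {V : Type} (G : SimpleGraph V) : SGraph V where
  pos u v := G.Adj u v
  neg _ _ := False
  pos_symm := fun _ _ h => h.symm
  neg_symm := fun _ _ h => h.elim
  pos_irrefl := fun v h => G.loopless.irrefl v h

/-! For `0 < p < 4`, a circular `p`-coloring of `S(G)` restricted to `V` is a map `x` into
`ℝ/pℤ` such that adjacent vertices are at circular distance in `[2 - p/2, p - 2]`: the
all-positive 4-cycle through a new vertex forces the upper bound, the negative one the lower
bound (via the antipodal point), and conversely any such `x` extends over each 4-cycle.
Under the doubling map `z ↦ 2z` this band condition becomes `4 - p ≤ ‖2 x_a - 2 x_b‖`, which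
after rescaling by `1 / (4 - p)` is a circular `p / (4 - p)`-coloring of `G`. So `S(G)` is
`p`-colorable iff `G` is `p / (4 - p)`-colorable, and `p / (4 - p) ≤ 3 ↔ p ≤ 3`. -/

namespace AddCircle

variable {p : ℝ}

theorem exists_coe_eq_abs_eq_norm (z : AddCircle p) :
    ∃ s : ℝ, (s : AddCircle p) = z ∧ |s| = ‖z‖ := by
  induction z using QuotientAddGroup.induction_on with
  | H x =>
    refine ⟨x - round (p⁻¹ * x) * p, ?_, (norm_eq p).symm⟩
    rw [coe_sub, ← zsmul_eq_mul, coe_zsmul, coe_period, smul_zero, sub_zero]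

theorem norm_coe_abs (t : ℝ) : ‖((|t| : ℝ) : AddCircle p)‖ = ‖(t : AddCircle p)‖ := by
  rcases abs_cases t with ⟨h, _⟩ | ⟨h, _⟩
  · rw [h]
  · rw [h, coe_neg, norm_neg]

theorem norm_coe_eq_min (hp : 0 < p) {t : ℝ} (h0 : 0 ≤ t) (h1 : t ≤ p) :
    ‖(t : AddCircle p)‖ = min t (p - t) := by
  rcases le_total t (p / 2) with h | h
  · rw [(norm_coe_eq_abs_iff p hp.ne').2 (by rw [abs_of_nonneg h0, abs_of_pos hp]; exact h),
      abs_of_nonneg h0, min_eq_left (by linarith)]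
  · have hsub : (t : AddCircle p) = ((t - p : ℝ) : AddCircle p) := by
      rw [coe_sub, coe_period, sub_zero]
    have habs : |t - p| ≤ |p| / 2 := by
      rw [abs_of_nonpos (by linarith), abs_of_pos hp]; linarith
    rw [hsub, (norm_coe_eq_abs_iff p hp.ne').2 habs, abs_of_nonpos (by linarith),
      min_eq_right (by linarith), neg_sub]

theorem one_le_norm_coe (hp : 0 < p) {t : ℝ} (h1 : 1 ≤ |t|) (h2 : |t| ≤ p - 1) :
    1 ≤ ‖(t : AddCircle p)‖ := by
  rw [← norm_coe_abs, norm_coe_eq_min hp (abs_nonneg t) (by linarith)]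
  exact le_min h1 (by linarith)

theorem norm_add_half_period (hp : 0 < p) (z : AddCircle p) :
    ‖z + ((p / 2 : ℝ) : AddCircle p)‖ = p / 2 - ‖z‖ := by
  obtain ⟨s, rfl, hs⟩ := exists_coe_eq_abs_eq_norm z
  have hs2 : |s| ≤ p / 2 := by
    simpa [hs, abs_of_pos hp] using norm_le_half_period p (x := (s : AddCircle p)) hp.ne'
  obtain ⟨hs₁, hs₂⟩ := abs_le.1 hs2
  rw [← coe_add, norm_coe_eq_min hp (by linarith) (by linarith), ← hs]
  rcases abs_cases s with ⟨h, _⟩ | ⟨h, _⟩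
  · rw [h, min_eq_right (by linarith)]; ring
  · rw [h, min_eq_left (by linarith)]; ring

theorem norm_sub_half_period (hp : 0 < p) (z : AddCircle p) :
    ‖z - ((p / 2 : ℝ) : AddCircle p)‖ = p / 2 - ‖z‖ := by
  have h : -((p / 2 : ℝ) : AddCircle p) = ((p / 2 : ℝ) : AddCircle p) := by
    rw [← coe_neg, ← coe_add_period, neg_add_eq_sub, sub_half]
  rw [sub_eq_add_neg, h, norm_add_half_period hp]

theorem norm_add_le_sub_norm_sub_norm (hp : 0 < p) (y z : AddCircle p) :
    ‖y + z‖ ≤ p - ‖y‖ - ‖z‖ := by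
  set h : AddCircle p := ((p / 2 : ℝ) : AddCircle p)
  have hyz : y + z = (y + h) + (z + h) := by
    rw [add_add_add_comm, ← coe_add, add_halves, coe_period, add_zero]
  calc ‖y + z‖ ≤ ‖y + h‖ + ‖z + h‖ := hyz ▸ norm_add_le _ _
    _ = p - ‖y‖ - ‖z‖ := by rw [norm_add_half_period hp, norm_add_half_period hp]; ring

theorem norm_two_nsmul (hp : 0 < p) (z : AddCircle p) :
    ‖2 • z‖ = min (2 * ‖z‖) (p - 2 * ‖z‖) := by
  obtain ⟨s, rfl, hs⟩ := exists_coe_eq_abs_eq_norm z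
  have hs2 : 2 * |s| ≤ p := by
    have := norm_le_half_period p (x := (s : AddCircle p)) hp.ne'
    rw [← hs, abs_of_pos hp] at this
    linarith
  rw [← coe_nsmul, nsmul_eq_mul, Nat.cast_ofNat, ← norm_coe_abs, abs_mul, abs_two,
    norm_coe_eq_min hp (by positivity) hs2, hs]

theorem le_norm_two_nsmul_iff (hp : 0 < p) (z : AddCircle p) {a : ℝ} :
    a ≤ ‖2 • z‖ ↔ a / 2 ≤ ‖z‖ ∧ ‖z‖ ≤ (p - a) / 2 := by
  rw [norm_two_nsmul hp, le_min_iff]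
  constructor <;> rintro ⟨h₁, h₂⟩ <;> constructor <;> linarith

theorem exists_one_le_norm_sub_of_norm_sub_le (hp : 0 < p) {y z : AddCircle p}
    (h : ‖y - z‖ ≤ p - 2) : ∃ c, 1 ≤ ‖y - c‖ ∧ 1 ≤ ‖c - z‖ := by
  obtain ⟨s, hs, hsn⟩ := exists_coe_eq_abs_eq_norm (y - z)
  obtain ⟨hs₁, hs₂⟩ := abs_le.1 (hsn.trans_le h)
  -- the point opposite the midpoint of the shorter arc from `z` to `y`
  refine ⟨z + ((s / 2 + p / 2 : ℝ) : AddCircle p), ?_, ?_⟩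
  · have hyc : y - (z + ((s / 2 + p / 2 : ℝ) : AddCircle p)) =
        ((s / 2 - p / 2 : ℝ) : AddCircle p) := by
      rw [← sub_sub, ← hs, ← coe_sub]; ring_nf
    rw [hyc]
    exact one_le_norm_coe hp (by rw [abs_of_nonpos (by linarith)]; linarith)
      (by rw [abs_of_nonpos (by linarith)]; linarith)
  · rw [add_sub_cancel_left]
    exact one_le_norm_coe hp (by rw [abs_of_nonneg (by linarith)]; linarith)
      (by rw [abs_of_nonneg (by linarith)]; linarith)

theorem norm_coe_mul_of_mul_eq {q t : ℝ} (ht : 0 ≤ t) (h : t * q = p) (x : ℝ) :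
    ‖((t * x : ℝ) : AddCircle p)‖ = t * ‖(x : AddCircle q)‖ := by
  subst h
  rw [norm_coe_mul, abs_of_nonneg ht]

end AddCircle

theorem cdist_eq_norm {p : ℝ} (hp : 0 < p) (x y : ℝ) :
    cdist p x y = ‖(x : AddCircle p) - y‖ := by
  have hrmod : ∀ d, rmod d p = p * Int.fract (p⁻¹ * d) := by
    intro d
    rw [rmod, Int.fract, inv_mul_eq_div, mul_sub, mul_div_cancel₀ _ hp.ne']
  rw [← AddCircle.coe_sub, AddCircle.norm_eq' p hp, abs_sub_round_eq_min, cdist, hrmod, hrmod,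
    ← mul_min_of_nonneg _ _ hp.le, ← neg_sub x y, mul_neg]
  by_cases h : Int.fract (p⁻¹ * (x - y)) = 0
  · rw [Int.fract_neg_eq_zero.2 h, h]; simp
  · rw [Int.fract_neg h]

namespace SGraph

variable {U : Type}

theorem isCircColoring_iff {H : SGraph U} {r : ℝ} (hr : 0 < r) (φ : U → ℝ) :
    H.IsCircColoring r φ ↔
      (∀ u v, H.pos u v → 1 ≤ ‖(φ u : AddCircle r) - φ v‖) ∧
      (∀ u v, H.neg u v → ‖(φ u : AddCircle r) - φ v‖ ≤ r / 2 - 1) := by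
  have hneg : ∀ x y : ℝ, cdist r x (y + r / 2) = r / 2 - ‖(x : AddCircle r) - y‖ := by
    intro x y
    rw [cdist_eq_norm hr, AddCircle.coe_add, ← sub_sub, AddCircle.norm_sub_half_period hr]
  refine and_congr (forall₂_congr fun u v => imp_congr_right fun _ => by rw [cdist_eq_norm hr])
    (forall₂_congr fun u v => imp_congr_right fun _ => ?_)
  rw [hneg]
  constructor <;> intro <;> linarith

theorem exists_isCircColoring [Finite U] (H : SGraph U) :
    ∃ r, 1 ≤ r ∧ ∃ φ, H.IsCircColoring r φ := by
  obtain ⟨n, ⟨e⟩⟩ := Finite.exists_equiv_fin U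
  obtain ⟨i, hi_inj, hi⟩ : ∃ i : U → ℕ, Function.Injective i ∧ ∀ u, i u < n :=
    ⟨fun u => e u, Fin.val_injective.comp e.injective, fun u => (e u).isLt⟩
  have hr : (0 : ℝ) < 2 * n + 2 := by positivity
  have hdist : ∀ u v, |(i u : ℝ) - i v| ≤ n - 1 := by
    intro u v
    have hu : (i u : ℝ) + 1 ≤ n := by exact_mod_cast hi u
    have hv : (i v : ℝ) + 1 ≤ n := by exact_mod_cast hi v
    rw [abs_sub_le_iff]
    constructor <;> linarith [(i u).cast_nonneg (α := ℝ), (i v).cast_nonneg (α := ℝ)]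
  refine ⟨2 * n + 2, by linarith [n.cast_nonneg (α := ℝ)], fun u => i u,
    (isCircColoring_iff hr _).2 ⟨fun u v huv => ?_, fun u v _ => ?_⟩⟩
  · have h1 : (1 : ℝ) ≤ |(i u : ℝ) - i v| := by
      rcases (hi_inj.ne fun h : u = v => H.pos_irrefl v (h ▸ huv)).lt_or_gt with h | h
      · have : (i u : ℝ) + 1 ≤ i v := by exact_mod_cast h
        exact le_abs.2 (.inr (by linarith))
      · have : (i v : ℝ) + 1 ≤ i u := by exact_mod_cast h
        exact le_abs.2 (.inl (by linarith))
    rw [← AddCircle.coe_sub]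
    exact AddCircle.one_le_norm_coe hr h1 (by linarith [hdist u v])
  · rw [← AddCircle.coe_sub]
    calc _ ≤ ‖(i u : ℝ) - i v‖ := QuotientAddGroup.norm_mk_le_norm
      _ ≤ (2 * n + 2) / 2 - 1 := by rw [Real.norm_eq_abs]; linarith [hdist u v]

theorem circChrom_le_iff [Finite U] (H : SGraph U) (c : ℝ) :
    H.circChrom ≤ c ↔
      ∀ ε > 0, ∃ r < c + ε, 1 ≤ r ∧ ∃ φ, H.IsCircColoring r φ := by
  obtain ⟨r, hr⟩ := H.exists_isCircColoring
  rw [circChrom, Real.sInf_le_iff ⟨1, fun _ h => h.1⟩ ⟨r, hr⟩]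
  exact forall₂_congr fun _ _ =>
    ⟨fun ⟨r, hr, hlt⟩ => ⟨r, hlt, hr⟩, fun ⟨r, hlt, hr⟩ => ⟨r, hr, hlt⟩⟩

end SGraph

section Gadget

variable {V : Type}

def IsBandColoring (G : SimpleGraph V) (p : ℝ) (x : V → AddCircle p) : Prop :=
  ∀ a b, G.Adj a b → 2 - p / 2 ≤ ‖x a - x b‖ ∧ ‖x a - x b‖ ≤ p - 2

variable {G : SimpleGraph V} {p : ℝ}

theorem exists_isBandColoring_iff_toPos (hp : 0 < p) (hp4 : p < 4) :
    (∃ x, IsBandColoring G p x) ↔ ∃ φ, (toPos G).IsCircColoring (p / (4 - p)) φ := by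
  have h4p : 0 < 4 - p := by linarith
  have hband : ∀ s t : ℝ,
      (2 - p / 2 ≤ ‖(s : AddCircle p) - t‖ ∧ ‖(s : AddCircle p) - t‖ ≤ p - 2) ↔
      1 ≤ ‖(((2 * s - 2 * t) / (4 - p) : ℝ) : AddCircle (p / (4 - p)))‖ := by
    intro s t
    have h2 : 2 • ((s : AddCircle p) - t) =
        (((4 - p) * ((2 * s - 2 * t) / (4 - p)) : ℝ) : AddCircle p) := by
      rw [mul_div_cancel₀ _ h4p.ne', ← AddCircle.coe_sub, ← AddCircle.coe_nsmul, nsmul_eq_mul]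
      ring_nf
    rw [← le_mul_iff_one_le_right h4p, ← AddCircle.norm_coe_mul_of_mul_eq h4p.le
      (mul_div_cancel₀ p h4p.ne'), ← h2, AddCircle.le_norm_two_nsmul_iff hp]
    ring_nf
  have hcol : ∀ φ : V → ℝ, (toPos G).IsCircColoring (p / (4 - p)) φ ↔
      ∀ a b, G.Adj a b → 1 ≤ ‖((φ a - φ b : ℝ) : AddCircle (p / (4 - p)))‖ := by
    intro φ
    rw [SGraph.isCircColoring_iff (div_pos hp h4p)]
    simp only [← AddCircle.coe_sub]
    exact ⟨fun h => h.1, fun h => ⟨h, fun _ _ h => h.elim⟩⟩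
  constructor
  · rintro ⟨x, hx⟩
    refine ⟨fun v => 2 * (x v).out / (4 - p), (hcol _).2 fun a b hab => ?_⟩
    rw [← sub_div, ← hband, QuotientAddGroup.out_eq', QuotientAddGroup.out_eq']
    exact hx a b hab
  · rintro ⟨φ, hφ⟩
    refine ⟨fun v => (((4 - p) / 2 * φ v : ℝ) : AddCircle p), fun a b hab => ?_⟩
    rw [hband]
    convert (hcol φ).1 hφ a b hab using 4
    field_simp

theorem isCircColoring_sConst_iff (hp : 0 < p) (ψ : V ⊕ V × V → ℝ) :
    (SConst G).IsCircColoring p ψ ↔ ∀ a b, G.Adj a b →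
      1 ≤ ‖(ψ (.inl a) : AddCircle p) - ψ (.inr (a, b))‖ ∧
      (WellOrderingRel a b →
        ‖(ψ (.inr (a, b)) : AddCircle p) - ψ (.inl b)‖ ≤ p / 2 - 1) ∧
      (¬ WellOrderingRel a b → 1 ≤ ‖(ψ (.inr (a, b)) : AddCircle p) - ψ (.inl b)‖) := by
  rw [SGraph.isCircColoring_iff hp]
  constructor
  · rintro ⟨hpos, hneg⟩ a b hab
    exact ⟨hpos _ _ ⟨a, a, b, hab, .inl rfl, .inl ⟨rfl, rfl⟩⟩,
      fun hW => hneg _ _ ⟨b, a, b, hab, rfl, hW, .inr ⟨rfl, rfl⟩⟩,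
      fun hW => hpos _ _ ⟨b, a, b, hab, .inr ⟨rfl, hW⟩, .inr ⟨rfl, rfl⟩⟩⟩
  · intro h
    constructor
    · rintro u v ⟨w, a, b, hab, hw, ⟨rfl, rfl⟩ | ⟨rfl, rfl⟩⟩ <;>
        rcases hw with rfl | ⟨rfl, hW⟩
      · exact (h _ _ hab).1
      · rw [norm_sub_rev]; exact (h _ _ hab).2.2 hW
      · rw [norm_sub_rev]; exact (h _ _ hab).1
      · exact (h _ _ hab).2.2 hW
    · rintro u v ⟨w, a, b, hab, rfl, hW, ⟨rfl, rfl⟩ | ⟨rfl, rfl⟩⟩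
      · rw [norm_sub_rev]; exact (h _ _ hab).2.1 hW
      · exact (h _ _ hab).2.1 hW

theorem exists_isCircColoring_sConst_of_isBandColoring (hp : 0 < p)
    {x : V → AddCircle p} (hx : IsBandColoring G p x) :
    ∃ ψ, (SConst G).IsCircColoring p ψ := by
  have hc : ∀ a b, ∃ c : AddCircle p, G.Adj a b → 1 ≤ ‖x a - c‖ ∧
      (WellOrderingRel a b → ‖c - x b‖ ≤ p / 2 - 1) ∧
      (¬ WellOrderingRel a b → 1 ≤ ‖c - x b‖) := by
    intro a b
    by_cases hab : G.Adj a b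
    swap
    · exact ⟨0, fun h => absurd h hab⟩
    obtain ⟨hlow, hupp⟩ := hx a b hab
    by_cases hW : WellOrderingRel a b
    · obtain ⟨c, hc₁, hc₂⟩ := AddCircle.exists_one_le_norm_sub_of_norm_sub_le hp
        (y := x a) (z := x b + ((p / 2 : ℝ) : AddCircle p))
        (by rw [← sub_sub, AddCircle.norm_sub_half_period hp]; linarith)
      rw [← sub_sub, AddCircle.norm_sub_half_period hp] at hc₂
      exact ⟨c, fun _ => ⟨hc₁, fun _ => by linarith, fun h => absurd hW h⟩⟩
    · obtain ⟨c, hc₁, hc₂⟩ := AddCircle.exists_one_le_norm_sub_of_norm_sub_le hp hupp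
      exact ⟨c, fun _ => ⟨hc₁, fun h => absurd h hW, fun _ => hc₂⟩⟩
  choose c hc using hc
  refine ⟨Sum.elim (fun v => (x v).out) (fun e => (c e.1 e.2).out),
    (isCircColoring_sConst_iff hp _).2 fun a b hab => ?_⟩
  simp only [Sum.elim_inl, Sum.elim_inr, QuotientAddGroup.out_eq']
  exact hc a b hab

theorem isBandColoring_of_isCircColoring_sConst (hp : 0 < p)
    {ψ : V ⊕ V × V → ℝ} (hψ : (SConst G).IsCircColoring p ψ) :
    IsBandColoring G p fun v => (ψ (.inl v) : AddCircle p) := by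
  have hψ := (isCircColoring_sConst_iff hp ψ).1 hψ
  have hband : ∀ a b, G.Adj a b → WellOrderingRel a b →
      2 - p / 2 ≤ ‖(ψ (.inl a) : AddCircle p) - ψ (.inl b)‖ ∧
      ‖(ψ (.inl a) : AddCircle p) - ψ (.inl b)‖ ≤ p - 2 := by
    intro a b hab hW
    obtain ⟨hac, hcb, -⟩ := hψ a b hab
    obtain ⟨hbc', -, hc'a⟩ := hψ b a hab.symm
    have hc'a := hc'a (asymm hW)
    constructor
    · linarith [norm_sub_le_norm_sub_add_norm_sub (ψ (.inl a) : AddCircle p) (ψ (.inl b))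
        (ψ (.inr (a, b))), norm_sub_rev (ψ (.inl b) : AddCircle p) (ψ (.inr (a, b))), hcb hW]
    · have := AddCircle.norm_add_le_sub_norm_sub_norm hp
        ((ψ (.inl b) : AddCircle p) - ψ (.inr (b, a)))
        ((ψ (.inr (b, a)) : AddCircle p) - ψ (.inl a))
      rw [sub_add_sub_cancel, norm_sub_rev] at this
      linarith
  intro a b hab
  rcases trichotomous_of WellOrderingRel a b with hW | rfl | hW
  · exact hband a b hab hW
  · exact absurd hab (G.loopless.irrefl a)
  · rw [norm_sub_rev]
    exact hband b a hab.symm hW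

theorem exists_isCircColoring_sConst_iff_toPos (hp : 0 < p) (hp4 : p < 4) :
    (∃ ψ, (SConst G).IsCircColoring p ψ) ↔
      ∃ φ, (toPos G).IsCircColoring (p / (4 - p)) φ := by
  rw [← exists_isBandColoring_iff_toPos hp hp4]
  exact ⟨fun ⟨_, hψ⟩ => ⟨_, isBandColoring_of_isCircColoring_sConst hp hψ⟩,
    fun ⟨_, hx⟩ => exists_isCircColoring_sConst_of_isBandColoring hp hx⟩

theorem exists_isCircColoring_toPos_of_le {r r' : ℝ} (hr : 0 < r) (hrr' : r ≤ r')
    (h : ∃ φ, (toPos G).IsCircColoring r φ) : ∃ φ, (toPos G).IsCircColoring r' φ := by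
  obtain ⟨φ, hφ⟩ := h
  have hφ := ((SGraph.isCircColoring_iff hr φ).1 hφ).1
  refine ⟨fun v => r' / r * φ v,
    (SGraph.isCircColoring_iff (hr.trans_le hrr') _).2
      ⟨fun u v huv => ?_, fun _ _ h => h.elim⟩⟩
  have hφuv := hφ u v huv
  rw [← AddCircle.coe_sub] at hφuv
  rw [← AddCircle.coe_sub, ← mul_sub, AddCircle.norm_coe_mul_of_mul_eq
    (div_nonneg (hr.le.trans hrr') hr.le) (div_mul_cancel₀ r' hr.ne')]
  exact hφuv.trans (le_mul_of_one_le_left (norm_nonneg _) ((one_le_div hr).2 hrr'))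

end Gadget

/-- `χ_c(G) ≤ 3` iff `χ_c(S(G)) ≤ 3`. -/
theorem circChrom_le_three_iff {V : Type} [Fintype V] (G : SimpleGraph V) :
    (toPos G).circChrom ≤ 3 ↔ (SConst G).circChrom ≤ 3 := by
  rw [SGraph.circChrom_le_iff, SGraph.circChrom_le_iff]
  constructor
  · intro h ε hε
    obtain ⟨q, hq, hq1, hφ⟩ := h ε hε
    have hp4 : 4 * q / (q + 1) < 4 := by rw [div_lt_iff₀ (by positivity)]; linarith
    refine ⟨4 * q / (q + 1), ?_, ?_,
      (exists_isCircColoring_sConst_iff_toPos (div_pos (by linarith) (by linarith)) hp4).2 ?_⟩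
    · rw [div_lt_iff₀ (by positivity)]; nlinarith
    · rw [le_div_iff₀ (by positivity)]; linarith
    · convert hφ using 3
      field_simp
      ring
  · intro h ε hε
    obtain ⟨p, hp, hp1, hψ⟩ := h (ε / (4 + ε)) (by positivity)
    have hδ : ε / (4 + ε) * (4 + ε) = ε := div_mul_cancel₀ _ (by positivity)
    have hp4 : p < 4 := by nlinarith
    -- `p / (4 - p)` drops below `1` when `G` has no edges
    refine ⟨max 1 (p / (4 - p)), max_lt (by linarith) ?_, le_max_left _ _,
      exists_isCircColoring_toPos_of_le (by positivity) (le_max_right _ _)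
        ((exists_isCircColoring_sConst_iff_toPos (by linarith) hp4).1 hψ)⟩
    rw [div_lt_iff₀ (by linarith)]
    nlinarith
end

section
/- Every signed bipartite graph admits a circular 4-coloring; hence the circular chromatic number of any signed bipartite graph is at most 4. -/
lemma rmod_eq (x r : ℝ) (n : ℤ) (h1 : (n:ℝ) ≤ x / r) (h2 : x / r < n + 1) :
    rmod x r = x - r * n := by
  have : ⌊x / r⌋ = n := Int.floor_eq_iff.mpr ⟨h1, h2⟩
  rw [rmod, this]

/-- every signed bipartite graph admits a circular 4-coloring; hence its
circular chromatic number is at most 4. -/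
theorem bipartite_circular_four {V : Type} (G : SGraph V) (h : G.Bipartite) :
    (∃ φ : V → ℝ, G.IsCircColoring 4 φ) ∧ G.circChrom ≤ 4 := by
  obtain ⟨c, hc⟩ := h
  have h1 : rmod 1 4 = 1 := by rw [rmod_eq 1 4 0] <;> norm_num
  have hm1 : rmod (-1) 4 = 3 := by rw [rmod_eq (-1) 4 (-1)] <;> norm_num
  have h3 : rmod 3 4 = 3 := by rw [rmod_eq 3 4 0] <;> norm_num
  have hm3 : rmod (-3) 4 = 1 := by rw [rmod_eq (-3) 4 (-1)] <;> norm_num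
  set φ : V → ℝ := fun v => if c v then 1 else 0 with hφ
  have key : G.IsCircColoring 4 φ := by
    constructor
    · intro u v huv
      have hne := hc u v (Or.inl huv)
      rcases Bool.eq_false_or_eq_true (c u) with hu | hu <;>
        rcases Bool.eq_false_or_eq_true (c v) with hv | hv <;>
        simp only [hu, hv, ne_eq, not_true_eq_false, not_false_eq_true] at hne ⊢ <;>
        simp only [hφ, hu, hv, if_true, if_false, cdist] <;>
        norm_num [h1, hm1]
    · intro u v huv
      have hne := hc u v (Or.inr huv)
      rcases Bool.eq_false_or_eq_true (c u) with hu | hu <;>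
        rcases Bool.eq_false_or_eq_true (c v) with hv | hv <;>
        simp only [hu, hv, ne_eq, not_true_eq_false, not_false_eq_true] at hne ⊢ <;>
        simp only [hφ, hu, hv, if_true, if_false, cdist] <;>
        norm_num [h1, hm1, h3, hm3]
  refine ⟨⟨φ, key⟩, ?_⟩
  apply csInf_le
  · exact ⟨1, fun r hr => hr.1⟩
  · exact ⟨by norm_num, φ, key⟩
end

section
/- A signed graph (G, σ) admits a circular p/q-coloring (p even, p ≥ 2q > 0) if and only if (G, σ) admits an edge-sign preserving homomorphism to the signed circular clique K^s_{p;q}. -/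
/-- The signed circular clique `K^s_{p;q}` on vertices `{0, …, p-1}`:
`ij` is a positive edge iff `q ≤ |i-j| ≤ p-q`, and `ij` is a negative edge iff
`|i-j| ≤ p/2 - q` or `|i-j| ≥ p/2 + q` (stated multiplied by `2` to avoid division;
`p` is even in all uses).  In particular there is a negative loop at every vertex. -/
def Ksclique (p q : ℕ) : SGraph (Fin p) where
  pos i j := i ≠ j ∧ (q : ℤ) ≤ |(i.val : ℤ) - (j.val : ℤ)| ∧
    |(i.val : ℤ) - (j.val : ℤ)| ≤ (p : ℤ) - q
  neg i j := 2 * |(i.val : ℤ) - (j.val : ℤ)| ≤ (p : ℤ) - 2 * q ∨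
    (p : ℤ) + 2 * q ≤ 2 * |(i.val : ℤ) - (j.val : ℤ)|
  pos_symm := by
    rintro i j ⟨hne, h1, h2⟩
    refine ⟨hne.symm, ?_, ?_⟩ <;> rwa [abs_sub_comm]
  neg_symm := by
    rintro i j (h | h)
    · left; rwa [abs_sub_comm]
    · right; rwa [abs_sub_comm]
  pos_irrefl := fun i h => h.1 rfl

/-- The signed bipartite circular clique `B_{p;q}`: the subgraph of `K^s_{p;q}`
consisting of the edges joining an even-labelled vertex to an odd-labelled vertex,
with the inherited signs. -/
def Bclique (p q : ℕ) : SGraph (Fin p) where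
  pos i j := (Ksclique p q).pos i j ∧ i.val % 2 ≠ j.val % 2
  neg i j := (Ksclique p q).neg i j ∧ i.val % 2 ≠ j.val % 2
  pos_symm := by
    rintro i j ⟨h, hp⟩
    exact ⟨(Ksclique p q).pos_symm i j h, fun e => hp e.symm⟩
  neg_symm := by
    rintro i j ⟨h, hp⟩
    exact ⟨(Ksclique p q).neg_symm i j h, fun e => hp e.symm⟩
  pos_irrefl := fun i h => h.2 rfl

/-! A circular `p/q`-coloring, scaled by `q`, places the vertices on a circle of circumference
`p` so that positive edges have their endpoints at distance at least `q`, and negative edges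
have one endpoint at distance at least `q` from the antipode `+ p/2` of the other. Rounding
every point down to an integer keeps these integer lower bounds, and the integers modulo `p`
with these adjacencies form exactly `K^s_{p;q}`. Conversely the vertex `i` of `K^s_{p;q}` is
the point `i / q` of the circle of circumference `p/q`. -/

section FarFromMultiples

variable {R : Type*}

/-- The distance from `d` to the nearest multiple of `p` is at least `q`. -/
def FarFromMultiples [Ring R] [LE R] (p q d : R) : Prop :=
  ∃ k : ℤ, q ≤ d + k * p ∧ d + k * p ≤ p - q

theorem farFromMultiples_intCast_iff [Ring R] [LinearOrder R] [IsStrictOrderedRing R]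
    {p q d : ℤ} : FarFromMultiples (p : R) q d ↔ FarFromMultiples p q d := by
  simp only [FarFromMultiples, Int.cast_id]
  norm_cast

theorem FarFromMultiples.floor_sub_floor [CommRing R] [LinearOrder R] [IsStrictOrderedRing R]
    [FloorRing R] {p q : ℤ} {x y : R} (h : FarFromMultiples (p : R) q (x - y)) :
    FarFromMultiples p q (⌊x⌋ - ⌊y⌋) := by
  obtain ⟨k, hlo, hhi⟩ := h
  have lo : ((q - 1 : ℤ) : R) < ((⌊x⌋ - ⌊y⌋ + k * p : ℤ) : R) := by
    push_cast
    linarith [Int.sub_one_lt_floor x, Int.floor_le y]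
  have hi : ((⌊x⌋ - ⌊y⌋ + k * p : ℤ) : R) < ((p - q + 1 : ℤ) : R) := by
    push_cast
    linarith [Int.floor_le x, Int.sub_one_lt_floor y]
  rw [Int.cast_lt] at lo hi
  refine ⟨k, ?_, ?_⟩ <;> simp only [Int.cast_id] <;> omega

theorem FarFromMultiples.of_modEq {p q d d' : ℤ} (h : FarFromMultiples p q d)
    (hd : d ≡ d' [ZMOD p]) : FarFromMultiples p q d' := by
  obtain ⟨k, hlo, hhi⟩ := h
  obtain ⟨c, hc⟩ := hd.dvd
  refine ⟨k - c, ?_, ?_⟩ <;> simp only [Int.cast_id] at * <;> linarith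

theorem farFromMultiples_iff_abs {p q d : ℤ} (hq : 0 ≤ q) (hd : |d| < p) :
    FarFromMultiples p q d ↔ q ≤ |d| ∧ |d| ≤ p - q := by
  obtain ⟨hd₁, hd₂⟩ := abs_lt.mp hd
  simp only [FarFromMultiples, Int.cast_id]
  constructor
  · rintro ⟨k, hlo, hhi⟩
    have hk₀ : 0 ≤ k := by nlinarith
    have hk₁ : k ≤ 1 := by nlinarith
    interval_cases k <;> rcases abs_cases d with ⟨h, _⟩ | ⟨h, _⟩ <;> omega
  · rintro ⟨hlo, hhi⟩
    rcases abs_cases d with ⟨h, _⟩ | ⟨h, _⟩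
    · exact ⟨0, by omega, by omega⟩
    · exact ⟨1, by omega, by omega⟩

theorem farFromMultiples_sub_half_iff {t q d : ℤ} (hq : 0 ≤ q) (hd : |d| < 2 * t) :
    FarFromMultiples (2 * t) q (d - t) ↔ 2 * |d| ≤ 2 * t - 2 * q ∨ 2 * t + 2 * q ≤ 2 * |d| := by
  obtain ⟨hd₁, hd₂⟩ := abs_lt.mp hd
  simp only [FarFromMultiples, Int.cast_id]
  constructor
  · rintro ⟨k, hlo, hhi⟩
    have hk₀ : 0 ≤ k := by nlinarith
    have hk₂ : k ≤ 2 := by nlinarith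
    interval_cases k <;> rcases abs_cases d with ⟨h, _⟩ | ⟨h, _⟩ <;> omega
  · intro h
    rcases abs_cases d with ⟨habs, _⟩ | ⟨habs, _⟩ <;> rw [habs] at h
    · rcases h with h | h
      · exact ⟨1, by omega, by omega⟩
      · exact ⟨0, by omega, by omega⟩
    · rcases h with h | h
      · exact ⟨1, by omega, by omega⟩
      · exact ⟨2, by omega, by omega⟩

end FarFromMultiples

theorem rmod_eq_add_int_mul {r x : ℝ} (hr : 0 < r) {k : ℤ} (h₀ : 0 ≤ x + k * r)
    (h₁ : x + k * r < r) : rmod x r = x + k * r := by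
  have hfloor : ⌊x / r⌋ = -k := by
    rw [Int.floor_eq_iff, le_div_iff₀ hr, div_lt_iff₀ hr]
    push_cast
    constructor <;> linarith
  rw [rmod, hfloor]
  push_cast
  ring

theorem rmod_mem_Ico {r : ℝ} (hr : 0 < r) (x : ℝ) : rmod x r ∈ Set.Ico 0 r := by
  have h₀ := Int.floor_le (x / r)
  have h₁ := Int.lt_floor_add_one (x / r)
  rw [le_div_iff₀ hr] at h₀
  rw [div_lt_iff₀ hr] at h₁
  constructor <;> simp only [rmod] <;> linarith

theorem cdist_mul {c : ℝ} (hc : 0 < c) (r x y : ℝ) :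
    cdist (c * r) (c * x) (c * y) = c * cdist r x y := by
  have hrmod : ∀ z, rmod (c * z) (c * r) = c * rmod z r := fun z => by
    rw [rmod, rmod, mul_div_mul_left _ _ hc.ne']
    ring
  simp only [cdist, ← mul_sub, hrmod, mul_min_of_nonneg _ _ hc.le]

theorem le_cdist_iff {r c x y : ℝ} (hr : 0 < r) (hc : 0 < c) :
    c ≤ cdist r x y ↔ FarFromMultiples r c (x - y) := by
  constructor
  · intro h
    obtain ⟨h₁, h₂⟩ := le_min_iff.mp h
    obtain ⟨-, hw⟩ := rmod_mem_Ico hr (x - y)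
    have hxy : rmod (x - y) r = x - y + (-⌊(x - y) / r⌋ : ℤ) * r := by
      rw [rmod]
      push_cast
      ring
    have hyx : rmod (y - x) r = r - rmod (x - y) r := by
      rw [hxy] at hw h₁ ⊢
      rw [rmod_eq_add_int_mul (k := 1 + ⌊(x - y) / r⌋) hr] <;> push_cast at * <;> linarith
    exact ⟨_, hxy ▸ h₁, by linarith⟩
  · rintro ⟨k, hlo, hhi⟩
    refine le_min ?_ ?_
    · rw [rmod_eq_add_int_mul hr (by linarith) (by linarith)]
      exact hlo
    · rw [rmod_eq_add_int_mul (k := 1 - k) hr (by push_cast; linarith) (by push_cast; linarith)]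
      push_cast
      linarith

theorem one_le_cdist_div_iff {p q : ℝ} (hp : 0 < p) (hq : 0 < q) (x y : ℝ) :
    1 ≤ cdist (p / q) x y ↔ FarFromMultiples p q (q * x - q * y) := by
  rw [← le_cdist_iff hp hq, ← mul_div_cancel₀ p hq.ne', cdist_mul hq, mul_div_cancel₀ p hq.ne']
  exact (le_mul_iff_one_le_right hq).symm

section

open scoped Fin.IntCast

theorem Fin.val_intCast_modEq {n : ℕ} [NeZero n] (x : ℤ) :
    (((x : Fin n) : ℕ) : ℤ) ≡ x [ZMOD n] := by
  rw [Fin.val_intCast, Int.toNat_of_nonneg (Int.emod_nonneg _ (by simp [NeZero.ne n]))]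
  exact Int.mod_modEq x n

end

theorem ksclique_pos_iff {p q : ℕ} (hq : 0 < q) (i j : Fin p) :
    (Ksclique p q).pos i j ↔ FarFromMultiples (p : ℤ) q ((i : ℤ) - j) := by
  have hij : |(i : ℤ) - j| < p := abs_sub_lt_iff.mpr ⟨by omega, by omega⟩
  rw [farFromMultiples_iff_abs (by positivity) hij]
  refine ⟨fun h => h.2, fun h => ⟨fun hij => ?_, h⟩⟩
  subst hij
  simp only [sub_self, abs_zero] at h
  omega

theorem ksclique_neg_iff {t : ℕ} (q : ℕ) (i j : Fin (2 * t)) :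
    (Ksclique (2 * t) q).neg i j ↔ FarFromMultiples ((2 * t : ℕ) : ℤ) q ((i : ℤ) - (j + t)) := by
  have hij : |(i : ℤ) - j| < 2 * t := abs_sub_lt_iff.mpr ⟨by omega, by omega⟩
  rw [← sub_sub, Nat.cast_mul, Nat.cast_ofNat, farFromMultiples_sub_half_iff (by positivity) hij]
  simp only [Ksclique, Nat.cast_mul, Nat.cast_ofNat]

namespace SGraph

variable {V : Type} (G : SGraph V)

theorem isSpHom_ksclique_iff {t q : ℕ} (hq : 0 < q) (f : V → Fin (2 * t)) :
    G.IsSpHom (Ksclique (2 * t) q) f ↔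
      (∀ u v, G.pos u v → FarFromMultiples ((2 * t : ℕ) : ℤ) q ((f u : ℤ) - f v)) ∧
      (∀ u v, G.neg u v → FarFromMultiples ((2 * t : ℕ) : ℤ) q ((f u : ℤ) - (f v + t))) := by
  simp only [IsSpHom, ksclique_pos_iff hq, ksclique_neg_iff]

theorem isCircColoring_div_iff {t q : ℕ} (ht : 0 < t) (hq : 0 < q) (φ : V → ℝ) :
    G.IsCircColoring ((2 * t : ℕ) / q) φ ↔
      (∀ u v, G.pos u v → FarFromMultiples ((2 * t : ℕ) : ℝ) q (q * φ u - q * φ v)) ∧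
      (∀ u v, G.neg u v → FarFromMultiples ((2 * t : ℕ) : ℝ) q (q * φ u - (q * φ v + t))) := by
  have hp : (0 : ℝ) < (2 * t : ℕ) := by positivity
  have hq' : (0 : ℝ) < q := by positivity
  have hantipode : ∀ y : ℝ, (q : ℝ) * (y + (2 * t : ℕ) / q / 2) = q * y + t := fun y => by
    push_cast
    field_simp
  simp only [IsCircColoring, one_le_cdist_div_iff hp hq', hantipode]

end SGraph

/-- for `p` even with `p ≥ 2q > 0`, a signed graph admits a circular
`p/q`-coloring iff it admits an edge-sign preserving homomorphism to `K^s_{p;q}`. -/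
theorem circular_coloring_iff_spHom_Ksclique {V : Type} (G : SGraph V) (p q : ℕ)
    (hp : 2 ∣ p) (hq : 0 < q) (hpq : 2 * q ≤ p) :
    (∃ φ : V → ℝ, G.IsCircColoring ((p : ℝ) / q) φ) ↔
      ∃ f : V → Fin p, G.IsSpHom (Ksclique p q) f := by
  obtain ⟨t, rfl⟩ := hp
  have : NeZero (2 * t) := ⟨by omega⟩
  simp only [G.isCircColoring_div_iff (t := t) (by omega) hq, G.isSpHom_ksclique_iff hq]
  constructor
  · rintro ⟨φ, hpos, hneg⟩
    open scoped Fin.IntCast in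
    refine ⟨fun v => (⌊(q : ℝ) * φ v⌋ : Fin (2 * t)), fun u v huv => ?_, fun u v huv => ?_⟩
    · have h := FarFromMultiples.floor_sub_floor (p := (2 * t : ℕ)) (q := q)
        (by simpa only [Int.cast_natCast] using hpos u v huv)
      exact h.of_modEq ((Fin.val_intCast_modEq _).sub (Fin.val_intCast_modEq _)).symm
    · have h := FarFromMultiples.floor_sub_floor (p := (2 * t : ℕ)) (q := q)
        (by simpa only [Int.cast_natCast] using hneg u v huv)
      rw [Int.floor_add_natCast] at h
      exact h.of_modEq
        ((Fin.val_intCast_modEq _).sub ((Fin.val_intCast_modEq _).add_right _)).symm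
  · rintro ⟨f, hpos, hneg⟩
    have hq' : (q : ℝ) ≠ 0 := by positivity
    refine ⟨fun v => (f v : ℝ) / q, fun u v huv => ?_, fun u v huv => ?_⟩
    · simp only [mul_div_cancel₀ _ hq']
      exact_mod_cast farFromMultiples_intCast_iff.2 (hpos u v huv)
    · simp only [mul_div_cancel₀ _ hq']
      exact_mod_cast farFromMultiples_intCast_iff.2 (hneg u v huv)
end

section
/- Let p be even, 2 ≤ p/q ≤ 4, with p/q in simplest form subject to p even, and suppose 4 divides p (so q is odd). If a signed bipartite graph (G, σ) admits an edge-sign preserving homomorphism to K^s_{p;q}, then it admits an edge-sign preserving homomorphism to the bipartite subgraph B_{p;q} of K^s_{p;q} induced by edges between even-labeled and odd-labeled vertices. -/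
/-- for `4 ∣ p`, `2 ≤ p/q ≤ 4`, `p/q` in simplest form subject to `p`
even, every signed bipartite graph admitting an edge-sign preserving homomorphism to
`K^s_{p;q}` admits one to the bipartite subgraph `B_{p;q}`. -/
theorem spHom_Ksclique_to_Bclique {V : Type} (G : SGraph V) (hbip : G.Bipartite)
    (p q : ℕ) (hp4 : 4 ∣ p) (hq : 0 < q) (h2q : 2 * q ≤ p) (h4q : p ≤ 4 * q)
    (hsimp : Nat.gcd p q ≤ 2 ∧ (Nat.gcd p q = 2 → p % 4 = 2))
    (h : ∃ f : V → Fin p, G.IsSpHom (Ksclique p q) f) :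
    ∃ f : V → Fin p, G.IsSpHom (Bclique p q) f := by
  classical
  obtain ⟨c, hc⟩ := hbip
  obtain ⟨f, hfpos, hfneg⟩ := h
  have hp0 : 0 < p := by omega
  have hp40 : p % 4 = 0 := by omega
  have hgcd : Nat.gcd p q = 1 := by
    obtain ⟨h1, h2⟩ := hsimp
    have h0 : Nat.gcd p q ≠ 0 := by
      intro h'
      have := Nat.eq_zero_of_gcd_eq_zero_left h'
      omega
    rcases Nat.lt_or_ge (Nat.gcd p q) 2 with hh | hh
    · omega
    · have hg2 : Nat.gcd p q = 2 := le_antisymm h1 hh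
      have := h2 hg2
      omega
  have hqodd : q % 2 = 1 := by
    by_contra h'
    have h2q' : (2 : ℕ) ∣ q := by omega
    have h2p : (2 : ℕ) ∣ p := by omega
    have := Nat.le_of_dvd (by omega) (Nat.dvd_gcd h2p h2q')
    omega
  -- target parity and shift
  set t : V → ℕ := fun u => if c u then 1 else 0 with ht
  set s : V → ℕ := fun u => if (f u).val % 2 = t u then 0 else 1 with hs
  have hts : ∀ u, t u ≤ 1 ∧ s u ≤ 1 := by
    intro u
    constructor
    · simp only [ht]; split <;> omega
    · simp only [hs]; split <;> omega
  have hAdd : ∀ u, ((f u).val + s u) % p = (f u).val + s u ∨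
      ((f u).val + s u = p ∧ ((f u).val + s u) % p = 0) := by
    intro u
    have hsu := (hts u).2
    have hx : (f u).val < p := (f u).isLt
    rcases Nat.lt_or_ge ((f u).val + s u) p with hh | hh
    · exact Or.inl (Nat.mod_eq_of_lt hh)
    · have he : (f u).val + s u = p := by omega
      exact Or.inr ⟨he, by rw [he]; exact Nat.mod_self p⟩
  have hsval : ∀ u, ((f u).val % 2 = t u ∧ s u = 0) ∨ ((f u).val % 2 ≠ t u ∧ s u = 1) := by
    intro u
    by_cases hcu : (f u).val % 2 = t u
    · exact Or.inl ⟨hcu, by simp [hs, hcu]⟩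
    · exact Or.inr ⟨hcu, by simp [hs, hcu]⟩
  have hpar : ∀ u, (((f u).val + s u) % p) % 2 = t u := by
    intro u
    have hx : (f u).val < p := (f u).isLt
    have htu := (hts u).1
    have hsv := hsval u
    rcases hAdd u with hd | ⟨he, hd⟩ <;> rw [hd] <;> omega
  have htne : ∀ u v, c u ≠ c v → t u ≠ t v := by
    intro u v huv
    simp only [ht]
    cases hcu : c u <;> cases hcv : c v <;> simp_all
  refine ⟨fun u => ⟨((f u).val + s u) % p, Nat.mod_lt _ hp0⟩, ?_, ?_⟩
  · -- positive edges
    intro u v hpos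
    have hcuv := hc u v (Or.inl hpos)
    obtain ⟨hne, h1, h2⟩ := hfpos u v hpos
    have hA : (f u).val < p := (f u).isLt
    have hB : (f v).val < p := (f v).isLt
    have hsa := (hts u).2
    have hsb := (hts v).2
    have hpu := hpar u
    have hpv := hpar v
    have htuv := htne u v hcuv
    have htu := (hts u).1
    have htv := (hts v).1
    have hAd := hAdd u
    have hBd := hAdd v
    have hparne : (((f u).val + s u) % p) % 2 ≠ (((f v).val + s v) % p) % 2 := by
      rw [hpu, hpv]; exact htuv
    refine ⟨⟨Fin.ne_of_val_ne (by simpa using fun e => hparne (by rw [e])), ?_, ?_⟩,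
      by simpa using hparne⟩ <;>
    · simp only []
      rcases abs_cases (((f u).val : ℤ) - ((f v).val : ℤ)) with ⟨e1, e2⟩ | ⟨e1, e2⟩ <;>
        rw [e1] at h1 h2 <;>
      rcases abs_cases (((((f u).val + s u) % p : ℕ) : ℤ) -
          (((((f v).val + s v) % p : ℕ)) : ℤ)) with ⟨e3, e4⟩ | ⟨e3, e4⟩ <;>
        rw [e3] <;> omega
  · -- negative edges
    intro u v hneg
    have hcuv := hc u v (Or.inr hneg)
    have h1 := hfneg u v hneg
    have hA : (f u).val < p := (f u).isLt
    have hB : (f v).val < p := (f v).isLt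
    have hsa := (hts u).2
    have hsb := (hts v).2
    have hpu := hpar u
    have hpv := hpar v
    have htuv := htne u v hcuv
    have htu := (hts u).1
    have htv := (hts v).1
    have hAd := hAdd u
    have hBd := hAdd v
    have hparne : (((f u).val + s u) % p) % 2 ≠ (((f v).val + s v) % p) % 2 := by
      rw [hpu, hpv]; exact htuv
    refine ⟨?_, by simpa using hparne⟩
    simp only [Ksclique] at h1 ⊢
    rcases abs_cases (((f u).val : ℤ) - ((f v).val : ℤ)) with ⟨e1, e2⟩ | ⟨e1, e2⟩ <;>
      rw [e1] at h1 <;>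
    rcases abs_cases (((((f u).val + s u) % p : ℕ) : ℤ) -
        (((((f v).val + s v) % p : ℕ)) : ℤ)) with ⟨e3, e4⟩ | ⟨e3, e4⟩ <;>
      rw [e3] <;> omega
end

section
/- Let p ≡ 2 (mod 4), 2 ≤ p/q ≤ 4, with p/q in simplest form subject to p even. If a signed bipartite graph (G, σ) admits an edge-sign preserving homomorphism to K^s_{p;q}, then it admits a switching homomorphism to the bipartite subgraph B_{p;q} of K^s_{p;q}. -/

private lemma amod (p m a : ℕ) (h : a < p) (hm : m ≤ p) :
    (a+m) % p = a+m ∨ (a+m)%p + p = a+m := by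
  rcases lt_or_ge (a+m) p with h'|h'
  · left; exact Nat.mod_eq_of_lt h'
  · right
    rw [Nat.mod_eq_sub_mod h', Nat.mod_eq_of_lt (by omega)]
    omega

private lemma flip_neg (p q m a b a' : ℕ) (hm : p = 2*m) (hq : 0 < q) (hqm : q ≤ m)
    (ha : a < p) (hb : b < p) (halt : a' < p) (ha' : a' = a + m ∨ a' + p = a + m)
    (h : 2 * |(a:ℤ) - b| ≤ (p:ℤ) - 2*q ∨ (p:ℤ) + 2*q ≤ 2*|(a:ℤ)-b|) :
    a' ≠ b ∧ (q:ℤ) ≤ |(a':ℤ) - b| ∧ |(a':ℤ)-b| ≤ (p:ℤ) - q := by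
  rcases ha' with h3|h3 <;> rcases h with h|h <;>
    simp only [Int.abs_eq_natAbs] at h ⊢ <;> omega

private lemma flip_pos (p q m a b a' : ℕ) (hm : p = 2*m) (hq : 0 < q) (hqm : q ≤ m)
    (ha : a < p) (hb : b < p) (halt : a' < p) (ha' : a' = a + m ∨ a' + p = a + m)
    (hab : a ≠ b) (h1 : (q:ℤ) ≤ |(a:ℤ) - b|) (h2 : |(a:ℤ)-b| ≤ (p:ℤ) - q) :
    2 * |(a':ℤ) - b| ≤ (p:ℤ) - 2*q ∨ (p:ℤ) + 2*q ≤ 2*|(a':ℤ)-b| := by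
  rcases ha' with h3|h3 <;>
    simp only [Int.abs_eq_natAbs] at h1 h2 ⊢ <;> omega

private lemma both_pos (p q m a b a' b' : ℕ) (hm : p = 2*m) (hq : 0 < q) (hqm : q ≤ m)
    (ha : a < p) (hb : b < p) (halt : a' < p) (hblt : b' < p)
    (ha' : a' = a + m ∨ a' + p = a + m) (hb' : b' = b + m ∨ b' + p = b + m)
    (hab : a ≠ b) (h1 : (q:ℤ) ≤ |(a:ℤ) - b|) (h2 : |(a:ℤ)-b| ≤ (p:ℤ) - q) :
    a' ≠ b' ∧ (q:ℤ) ≤ |(a':ℤ) - b'| ∧ |(a':ℤ)-b'| ≤ (p:ℤ) - q := by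
  rcases ha' with h3|h3 <;> rcases hb' with h4|h4 <;>
    simp only [Int.abs_eq_natAbs] at h1 h2 ⊢ <;> omega

private lemma both_neg (p q m a b a' b' : ℕ) (hm : p = 2*m) (hq : 0 < q) (hqm : q ≤ m)
    (ha : a < p) (hb : b < p) (halt : a' < p) (hblt : b' < p)
    (ha' : a' = a + m ∨ a' + p = a + m) (hb' : b' = b + m ∨ b' + p = b + m)
    (h : 2 * |(a:ℤ) - b| ≤ (p:ℤ) - 2*q ∨ (p:ℤ) + 2*q ≤ 2*|(a:ℤ)-b|) :
    2 * |(a':ℤ) - b'| ≤ (p:ℤ) - 2*q ∨ (p:ℤ) + 2*q ≤ 2*|(a':ℤ)-b'| := by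
  rcases ha' with h3|h3 <;> rcases hb' with h4|h4 <;> rcases h with h|h <;>
    simp only [Int.abs_eq_natAbs] at h ⊢ <;> omega

private def antiF (p m : ℕ) (hp : 0 < p) (i : Fin p) : Fin p :=
  ⟨(i.val + m) % p, Nat.mod_lt _ hp⟩

section KsLemmas

variable (p q m : ℕ) (hp : 0 < p)

private lemma antiF_spec (i : Fin p) (hmp : m ≤ p) :
    (antiF p m hp i).val = i.val + m ∨ (antiF p m hp i).val + p = i.val + m :=
  amod p m i.val i.isLt hmp

private lemma ks_flip_neg (hm : p = 2*m) (hq : 0 < q) (hqm : q ≤ m) (i j : Fin p) (h : (Ksclique p q).neg i j) :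
    (Ksclique p q).pos (antiF p m hp i) j := by
  have key := flip_neg p q m i.val j.val (antiF p m hp i).val hm hq hqm i.isLt j.isLt
    (antiF p m hp i).isLt (antiF_spec p m hp i (by omega)) h
  exact ⟨fun e => key.1 (congrArg Fin.val e), key.2.1, key.2.2⟩

private lemma ks_flip_pos (hm : p = 2*m) (hq : 0 < q) (hqm : q ≤ m) (i j : Fin p) (h : (Ksclique p q).pos i j) :
    (Ksclique p q).neg (antiF p m hp i) j := by
  obtain ⟨hne, h1, h2⟩ := h
  exact flip_pos p q m i.val j.val (antiF p m hp i).val hm hq hqm i.isLt j.isLt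
    (antiF p m hp i).isLt (antiF_spec p m hp i (by omega))
    (fun e => hne (Fin.val_injective e)) h1 h2

private lemma ks_both_pos (hm : p = 2*m) (hq : 0 < q) (hqm : q ≤ m) (i j : Fin p) (h : (Ksclique p q).pos i j) :
    (Ksclique p q).pos (antiF p m hp i) (antiF p m hp j) := by
  obtain ⟨hne, h1, h2⟩ := h
  have key := both_pos p q m i.val j.val (antiF p m hp i).val (antiF p m hp j).val hm hq hqm
    i.isLt j.isLt (antiF p m hp i).isLt (antiF p m hp j).isLt
    (antiF_spec p m hp i (by omega)) (antiF_spec p m hp j (by omega))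
    (fun e => hne (Fin.val_injective e)) h1 h2
  exact ⟨fun e => key.1 (congrArg Fin.val e), key.2.1, key.2.2⟩

private lemma ks_both_neg (hm : p = 2*m) (hq : 0 < q) (hqm : q ≤ m) (i j : Fin p) (h : (Ksclique p q).neg i j) :
    (Ksclique p q).neg (antiF p m hp i) (antiF p m hp j) :=
  both_neg p q m i.val j.val (antiF p m hp i).val (antiF p m hp j).val hm hq hqm
    i.isLt j.isLt (antiF p m hp i).isLt (antiF p m hp j).isLt
    (antiF_spec p m hp i (by omega)) (antiF_spec p m hp j (by omega)) h

end KsLemmas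

/-- for `p ≡ 2 (mod 4)`, `2 ≤ p/q ≤ 4`, `p/q` in simplest form subject
to `p` even, every signed bipartite graph admitting an edge-sign preserving
homomorphism to `K^s_{p;q}` admits a switching homomorphism to `B_{p;q}`. -/
theorem spHom_Ksclique_to_swHom_Bclique {V : Type} (G : SGraph V) (hbip : G.Bipartite)
    (p q : ℕ) (hp4 : p % 4 = 2) (hq : 0 < q) (h2q : 2 * q ≤ p) (h4q : p ≤ 4 * q)
    (hsimp : Nat.gcd p q ≤ 2)
    (h : ∃ f : V → Fin p, G.IsSpHom (Ksclique p q) f) :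
    G.SwHom (Bclique p q) := by
  obtain ⟨c, hc⟩ := hbip
  obtain ⟨f, hfp, hfn⟩ := h
  have hp : 0 < p := by omega
  obtain ⟨m, hm⟩ : ∃ m, p = 2*m := ⟨p/2, by omega⟩
  have hmodd : m % 2 = 1 := by omega
  have hqm : q ≤ m := by omega
  have hpar : ∀ i : Fin p, (antiF p m hp i).val % 2 ≠ i.val % 2 := by
    intro i
    rcases antiF_spec p m hp i (by omega) with h|h <;> omega
  classical
  set t : V → ℕ := fun v => if c v then 1 else 0 with ht_def
  set s : V → Bool := fun v => decide ((f v).val % 2 ≠ t v) with hs_def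
  set g : V → Fin p := fun v => if s v then antiF p m hp (f v) else f v with hg_def
  have htlt : ∀ v, t v ≤ 1 := by
    intro v; simp only [ht_def]; split <;> omega
  have hg : ∀ v, (g v).val % 2 = t v := by
    intro v
    by_cases hsv : s v
    · have h2 : (f v).val % 2 ≠ t v := by
        simpa only [hs_def, decide_eq_true_eq] using hsv
      have h3 := hpar (f v)
      have h4 := htlt v
      simp only [hg_def, hsv, if_true]
      omega
    · have h2 : (f v).val % 2 = t v := by
        by_contra h2
        exact hsv (by simp only [hs_def, decide_eq_true_eq]; exact h2)
      simp only [hg_def, hsv, if_false]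
      exact h2
  have htne : ∀ u v : V, c u ≠ c v → t u ≠ t v := by
    intro u v hne
    simp only [ht_def]
    by_cases h1 : c u <;> by_cases h2 : c v <;> simp_all
  have hparne : ∀ u v : V, G.pos u v ∨ G.neg u v → (g u).val % 2 ≠ (g v).val % 2 := by
    intro u v he
    rw [hg u, hg v]
    exact htne u v (hc u v he)
  have hks : ∀ u v : V, (su sv : Bool) → su = s u → sv = s v →
      True := fun _ _ _ _ _ _ => trivial
  refine ⟨s, g, ?_, ?_⟩
  · -- positive edges of the switched graph
    rintro u v (⟨hsuv, hpos⟩ | ⟨hsuv, hneg⟩)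
    · refine ⟨?_, hparne u v (Or.inl hpos)⟩
      have hf := hfp u v hpos
      by_cases hsu : s u
      · have hsv : s v = true := by rw [← hsuv, hsu]
        simp only [hg_def, hsu, hsv, if_true]
        exact ks_both_pos p q m hp hm hq hqm _ _ hf
      · have hsv : s v = false := by rw [← hsuv]; simp [hsu]
        simp only [hg_def, hsu, hsv, if_false, Bool.false_eq_true]
        exact hf
    · refine ⟨?_, hparne u v (Or.inr hneg)⟩
      have hf := hfn u v hneg
      by_cases hsu : s u
      · have hsv : s v = false := by
          cases hv : s v
          · rfl
          · exact absurd (by rw [hsu, hv]) hsuv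
        simp only [hg_def, hsu, hsv, if_true, if_false, Bool.false_eq_true]
        exact ks_flip_neg p q m hp hm hq hqm _ _ hf
      · have hsv : s v = true := by
          cases hv : s v
          · exact absurd (by rw [hv]; simp [hsu]) hsuv
          · rfl
        simp only [hg_def, hsu, hsv, if_true, if_false, Bool.false_eq_true]
        exact (Ksclique p q).pos_symm _ _
          (ks_flip_neg p q m hp hm hq hqm _ _ ((Ksclique p q).neg_symm _ _ hf))
  · -- negative edges of the switched graph
    rintro u v (⟨hsuv, hneg⟩ | ⟨hsuv, hpos⟩)
    · refine ⟨?_, hparne u v (Or.inr hneg)⟩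
      have hf := hfn u v hneg
      by_cases hsu : s u
      · have hsv : s v = true := by rw [← hsuv, hsu]
        simp only [hg_def, hsu, hsv, if_true]
        exact ks_both_neg p q m hp hm hq hqm _ _ hf
      · have hsv : s v = false := by rw [← hsuv]; simp [hsu]
        simp only [hg_def, hsu, hsv, if_false, Bool.false_eq_true]
        exact hf
    · refine ⟨?_, hparne u v (Or.inl hpos)⟩
      have hf := hfp u v hpos
      by_cases hsu : s u
      · have hsv : s v = false := by
          cases hv : s v
          · rfl
          · exact absurd (by rw [hsu, hv]) hsuv
        simp only [hg_def, hsu, hsv, if_true, if_false, Bool.false_eq_true]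
        exact ks_flip_pos p q m hp hm hq hqm _ _ hf
      · have hsv : s v = true := by
          cases hv : s v
          · exact absurd (by rw [hv]; simp [hsu]) hsuv
          · rfl
        simp only [hg_def, hsu, hsv, if_true, if_false, Bool.false_eq_true]
        exact (Ksclique p q).neg_symm _ _
          (ks_flip_pos p q m hp hm hq hqm _ _ ((Ksclique p q).pos_symm _ _ hf))
end
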